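/- arXiv:2506.05112 — 6 statements merged into one kernel-verified Lean document; each statement's English description precedes it below -/
import Mathlib

section
/- Let (M,d) be a metric space and let W_n (n ∈ ℕ), defined on a common probability space, be stochastic processes indexed by [0,1] with values in M and continuous sample paths. Let ρ₀ : [0,1] → [0,∞) be an increasing function with ρ₀(0) = 0 and ρ₀(h) > 0 for h > 0. Assume: (T-M) there exists C > 0 such that for every t > C there are κ(t) > 1 and K(t) > 0 with P( d(W_n(u), W_n(v)) > t·ρ₀(|u−v|) ) ≤ K(t)·|u−v|^{κ(t)} for all n ∈ ℕ and all u, v ∈ [0,1] with u ≠ v; and (R) there exist p > 0 and K̃ > 0 such that ρ₀(z·h) ≤ K̃·z^p·ρ₀(h) for all h, z ∈ [0,1]. Then for every t > C, sup_n P( sup{ d(W_n(u), W_n(v))/ρ₀(|u−v|) : u, v ∈ [0,1], 0 < |u−v| ≤ h } > t ) → 0 as h → 0. -/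
open MeasureTheory ProbabilityTheory Filter Topology Set
open scoped ENNReal NNReal

noncomputable section

/-- The interpolated partial sum process of `Y 1, …, Y n`. -/
def psp (n : ℕ) (Y : ℕ → ℝ) (u : ℝ) : ℝ :=
  ((∑ t ∈ Finset.Icc 1 ⌊u * (n : ℝ)⌋₊, Y t)
    + (u * (n : ℝ) - (⌊u * (n : ℝ)⌋₊ : ℝ)) * Y (⌊u * (n : ℝ)⌋₊ + 1)) / Real.sqrt n

/-- The critical modulus ρ₂(h) = √(h log(e/h)). -/
def rho2 (h : ℝ) : ℝ := Real.sqrt (h * Real.log (Real.exp 1 / h))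

/-- Hölder-type seminorm (valued in `ℝ≥0∞`) over pairs `u ≠ v` in `[0,1]`. -/
def holderSemi (ρ : ℝ → ℝ) (f : ℝ → ℝ) : ℝ≥0∞ :=
  ⨆ (u : ℝ) (v : ℝ) (_ : u ∈ Icc (0:ℝ) 1 ∧ v ∈ Icc (0:ℝ) 1 ∧ u ≠ v),
    ENNReal.ofReal (|f u - f v| / ρ |u - v|)

/-- Hölder-type seminorm restricted to pairs at distance at most `δ`. -/
def holderSemiSmall (ρ : ℝ → ℝ) (f : ℝ → ℝ) (δ : ℝ) : ℝ≥0∞ :=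
  ⨆ (u : ℝ) (v : ℝ) (_ : u ∈ Icc (0:ℝ) 1 ∧ v ∈ Icc (0:ℝ) 1 ∧ u ≠ v ∧ |u - v| ≤ δ),
    ENNReal.ofReal (|f u - f v| / ρ |u - v|)

/-- Sup-norm on `[0,1]`, valued in `ℝ≥0∞`. -/
def supNormE (f : ℝ → ℝ) : ℝ≥0∞ :=
  ⨆ (u : ℝ) (_ : u ∈ Icc (0:ℝ) 1), ENNReal.ofReal |f u|

/-- The Hölder-type norm ‖f‖_∞ + |f|_ρ. -/
def normRho (ρ : ℝ → ℝ) (f : ℝ → ℝ) : ℝ≥0∞ := supNormE f + holderSemi ρ f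

/-- A modulus of continuity. -/
structure IsModulus (ρ : ℝ → ℝ) : Prop where
  continuousOn : ContinuousOn ρ (Icc 0 1)
  mono : MonotoneOn ρ (Icc 0 1)
  zero : ρ 0 = 0
  pos : ∀ h : ℝ, 0 < h → h ≤ 1 → 0 < ρ h

/-- Membership in C^ρ_0. -/
def MemC0 (ρ : ℝ → ℝ) (f : ℝ → ℝ) : Prop :=
  ContinuousOn f (Icc 0 1) ∧
    Tendsto (fun δ => holderSemiSmall ρ f δ) (𝓝[>] (0:ℝ)) (𝓝 0)

/-- A standard Brownian motion (on `[0,∞)`). -/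
structure IsStdBrownian {Ω : Type*} [MeasurableSpace Ω] (P : Measure Ω)
    (B : Ω → ℝ → ℝ) : Prop where
  cont : ∀ ω, Continuous (B ω)
  zero : ∀ ω, B ω 0 = 0
  meas : ∀ u : ℝ, Measurable fun ω => B ω u
  gauss : ∀ u v : ℝ, 0 ≤ u → u ≤ v →
    Measure.map (fun ω => B ω v - B ω u) P = gaussianReal 0 (Real.toNNReal (v - u))
  indep : ∀ (k : ℕ) (t : ℕ → ℝ), Monotone t → (∀ i, 0 ≤ t i) →
    iIndepFun
      (fun i : Fin k => fun ω => B ω (t (i + 1)) - B ω (t i)) P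

/-- The (1−α)-quantile of |B|_{ρ₂}. -/
def qAlpha {Ω' : Type*} [MeasurableSpace Ω'] (P' : Measure Ω') (B : Ω' → ℝ → ℝ)
    (α : ℝ) : ℝ :=
  sInf {t : ℝ | 1 - α ≤ (P' {ω | holderSemi rho2 (B ω) ≤ ENNReal.ofReal t}).toReal}

/-- The difference-based variance estimator σ̂ₙ². -/
def sigmaHatSq (n : ℕ) (Y : ℕ → ℝ) : ℝ :=
  (∑ t ∈ Finset.Icc 2 n, (Y t - Y (t - 1)) ^ 2) / (2 * ((n : ℝ) - 1))

/-- The ψ₂ (sub-Gaussian) Orlicz norm, valued in ℝ≥0∞. -/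
def psi2 {Ω : Type*} [MeasurableSpace Ω] (P : Measure Ω) (X : Ω → ℝ) : ℝ≥0∞ :=
  sInf {c : ℝ≥0∞ | 0 < c ∧ c ≠ ⊤ ∧
    Integrable (fun ω => Real.exp ((X ω) ^ 2 / c.toReal ^ 2)) P ∧
    ∫ ω, Real.exp ((X ω) ^ 2 / c.toReal ^ 2) ∂P ≤ 2}

/-- Finite-dimensional-distribution convergence on [0,1]. -/
def FidiConverges {Ω Ω' : Type*} [MeasurableSpace Ω] [MeasurableSpace Ω']
    (P : Measure Ω) (P' : Measure Ω') (Wn : ℕ → Ω → ℝ → ℝ) (W : Ω' → ℝ → ℝ) : Prop :=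
  ∀ (k : ℕ) (u : Fin k → ℝ), (∀ i, u i ∈ Icc (0:ℝ) 1) →
    ∀ F : BoundedContinuousFunction (Fin k → ℝ) ℝ,
      Tendsto (fun n => ∫ ω, F (fun i => Wn n ω (u i)) ∂P) atTop
        (𝓝 (∫ ω, F (fun i => W ω (u i)) ∂P'))

/-!
Fix `C < s < t` and apply (T-M) at level `s`. Call a path good at level `j` if for all points
`i/2^j < k/2^j` of the dyadic grid in `[0,1]` at most `G = 2^(m+1)` steps apart,
`d(W(i/2^j), W(k/2^j)) ≤ s ρ₀((k-i)/2^j)`. A union bound over the `≤ 2^j G` pairs shows that some level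
`j ≥ N` is bad with probability `O((2^(1-κ))^N)`, uniformly in `n`, and `κ > 1` makes this tend to zero.

On paths good at every level `j ≥ N`, any `u < v` with `v - u ≤ 2^-N` is handled at a single level
`L ≈ log₂ (1/(v-u)) + m`: the grid points just inside `[u, v]` are at most `G` steps apart, which costs
`s ρ₀(v - u)`, while the distances from `u` and `v` to these grid points are controlled by chaining
along dyadic floors and cost `O(q^m ρ₀(v - u))` with `q = 2^-p`, by the scaling condition (R).
Allowing `G` steps at one level, rather than only neighbours, is what keeps the leading constant at `s`
instead of a multiple of it; taking `m` large gives `d(W u, W v) ≤ t ρ₀(v - u)`.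
-/

lemma Nat.floor_two_mul_eq_or (x : ℝ) :
    ⌊2 * x⌋₊ = 2 * ⌊x⌋₊ ∨ ⌊2 * x⌋₊ = 2 * ⌊x⌋₊ + 1 := by
  have h : ⌊2 * x⌋₊ / 2 = ⌊x⌋₊ := by rw [← Nat.floor_div_ofNat]; congr 1; ring
  omega

lemma Nat.floor_mul_two_pow_le {w : ℝ} (hw : w ≤ 1) (j : ℕ) : ⌊w * 2 ^ j⌋₊ ≤ 2 ^ j :=
  Nat.floor_le_of_le (by push_cast; nlinarith [pow_pos (two_pos (α := ℝ)) j])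

lemma one_div_two_pow_mem_Icc (j : ℕ) : (1 / 2 ^ j : ℝ) ∈ Icc 0 1 :=
  ⟨by positivity, by rw [div_le_one (by positivity)]; exact one_le_pow₀ one_le_two⟩

def dyadicFloor (w : ℝ) (j : ℕ) : ℝ := ⌊w * 2 ^ j⌋₊ / 2 ^ j

lemma dyadicFloor_le {w : ℝ} (hw : 0 ≤ w) (j : ℕ) : dyadicFloor w j ≤ w := by
  rw [dyadicFloor, div_le_iff₀ (by positivity)]
  exact Nat.floor_le (by positivity)

lemma sub_lt_dyadicFloor (w : ℝ) (j : ℕ) : w - 1 / 2 ^ j < dyadicFloor w j := by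
  have h2 : (0:ℝ) < 2 ^ j := by positivity
  rw [dyadicFloor, sub_lt_iff_lt_add, ← add_div, lt_div_iff₀ h2]
  linarith [Nat.lt_floor_add_one (w * 2 ^ j)]

lemma dyadicFloor_mem_Icc {w : ℝ} (hw : w ∈ Icc 0 1) (j : ℕ) : dyadicFloor w j ∈ Icc 0 1 :=
  ⟨by unfold dyadicFloor; positivity, (dyadicFloor_le hw.1 j).trans hw.2⟩

lemma tendsto_dyadicFloor {w : ℝ} (hw : w ∈ Icc 0 1) :
    Tendsto (dyadicFloor w) atTop (𝓝[Icc 0 1] w) := by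
  refine tendsto_nhdsWithin_iff.2 ⟨?_, .of_forall (dyadicFloor_mem_Icc hw)⟩
  have h : Tendsto (fun j : ℕ => w - 1 / 2 ^ j) atTop (𝓝 w) := by
    simpa [one_div_pow] using (tendsto_pow_atTop_nhds_zero_of_lt_one
      (by norm_num : (0:ℝ) ≤ 1 / 2) (by norm_num)).const_sub w
  exact tendsto_of_tendsto_of_tendsto_of_le_of_le h tendsto_const_nhds
    (fun j => (sub_lt_dyadicFloor w j).le) (dyadicFloor_le hw.1)

section Chaining

variable {E : Type*} [PseudoMetricSpace E] {f : ℝ → E} {ρ : ℝ → ℝ} {s : ℝ}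

def DyadicIncrementsLE (f : ℝ → E) (ρ : ℝ → ℝ) (s : ℝ) (G j : ℕ) : Prop :=
  ∀ i k : ℕ, i < k → k ≤ 2 ^ j → k ≤ i + G →
    dist (f (i / 2 ^ j)) (f (k / 2 ^ j)) ≤ s * ρ (k / 2 ^ j - i / 2 ^ j)

lemma DyadicIncrementsLE.dist_le_of_succ {G j i : ℕ} (h : DyadicIncrementsLE f ρ s G j)
    (hG : 1 ≤ G) (hi : i + 1 ≤ 2 ^ j) :
    dist (f (i / 2 ^ j)) (f ((i + 1 : ℕ) / 2 ^ j)) ≤ s * ρ (1 / 2 ^ j) := by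
  have := h i (i + 1) (by omega) hi (by omega)
  simpa only [Nat.cast_succ, ← sub_div, add_sub_cancel_left] using this

lemma dist_dyadicFloor_succ_le {G j : ℕ} {w : ℝ} (hw : w ∈ Icc 0 1) (hG : 1 ≤ G)
    (hρ : 0 ≤ s * ρ (1 / 2 ^ (j + 1))) (h : DyadicIncrementsLE f ρ s G (j + 1)) :
    dist (f (dyadicFloor w j)) (f (dyadicFloor w (j + 1))) ≤ s * ρ (1 / 2 ^ (j + 1)) := by
  have h2 : w * 2 ^ (j + 1) = 2 * (w * 2 ^ j) := by ring
  have hcoarse : dyadicFloor w j = (2 * ⌊w * 2 ^ j⌋₊ : ℕ) / 2 ^ (j + 1) := by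
    rw [dyadicFloor, pow_succ]; push_cast; field_simp
  rcases Nat.floor_two_mul_eq_or (w * 2 ^ j) with hfine | hfine
  · rw [hcoarse, dyadicFloor, h2, hfine, dist_self]
    exact hρ
  · rw [hcoarse, dyadicFloor, h2, hfine]
    refine h.dist_le_of_succ hG ?_
    rw [← hfine, ← h2]
    exact Nat.floor_mul_two_pow_le hw.2 _

lemma dist_dyadicFloor_le {G L : ℕ} {Kt q w : ℝ} (hf : ContinuousOn f (Icc 0 1))
    (hw : w ∈ Icc 0 1) (hG : 1 ≤ G) (hs : 0 ≤ s) (hρ : ∀ h ∈ Icc (0:ℝ) 1, 0 ≤ ρ h)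
    (hq0 : 0 ≤ q) (hq1 : q < 1)
    (hscale : ∀ L n : ℕ, ρ (1 / 2 ^ (L + n)) ≤ Kt * q ^ n * ρ (1 / 2 ^ L))
    (hgood : ∀ j ≥ L, DyadicIncrementsLE f ρ s G j) :
    dist (f (dyadicFloor w L)) (f w) ≤ s * Kt * q / (1 - q) * ρ (1 / 2 ^ L) := by
  have hlim : Tendsto (fun n => f (dyadicFloor w (L + n))) atTop (𝓝 (f w)) :=
    (hf w hw).tendsto.comp <| (tendsto_dyadicFloor hw).comp <|
      (tendsto_add_atTop_nat L).congr fun n => add_comm n L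
  have hstep (n : ℕ) : dist (f (dyadicFloor w (L + n))) (f (dyadicFloor w (L + n).succ)) ≤
      s * Kt * q * ρ (1 / 2 ^ L) * q ^ n := by
    calc _ ≤ s * ρ (1 / 2 ^ (L + n + 1)) :=
          dist_dyadicFloor_succ_le hw hG (mul_nonneg hs (hρ _ (one_div_two_pow_mem_Icc _)))
            (hgood _ (by omega))
      _ ≤ s * (Kt * q ^ (n + 1) * ρ (1 / 2 ^ L)) := mul_le_mul_of_nonneg_left (hscale L (n + 1)) hs
      _ = s * Kt * q * ρ (1 / 2 ^ L) * q ^ n := by ring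
  calc dist (f (dyadicFloor w L)) (f w) ≤ ∑' n, s * Kt * q * ρ (1 / 2 ^ L) * q ^ n :=
        dist_le_tsum_of_dist_le_of_tendsto₀ _ hstep
          ((summable_geometric_of_lt_one hq0 hq1).mul_left _) hlim
    _ = s * Kt * q / (1 - q) * ρ (1 / 2 ^ L) := by
        rw [tsum_mul_left, tsum_geometric_of_lt_one hq0 hq1]; ring

lemma dist_le_of_dyadicIncrementsLE {G L : ℕ} {u v τ : ℝ} (hmono : MonotoneOn ρ (Icc 0 1))
    (hs : 0 ≤ s) (hu : u ∈ Icc 0 1) (hv : v ∈ Icc 0 1) (hG : 1 ≤ G)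
    (hgap : 2 ≤ (v - u) * 2 ^ L) (hgapG : (v - u) * 2 ^ L ≤ G)
    (hgood : DyadicIncrementsLE f ρ s G L)
    (htail : ∀ w ∈ Icc (0:ℝ) 1, dist (f (dyadicFloor w L)) (f w) ≤ τ) :
    dist (f u) (f v) ≤ s * ρ (v - u) + s * ρ (1 / 2 ^ L) + 2 * τ := by
  set a := ⌊u * 2 ^ L⌋₊
  set b := ⌊v * 2 ^ L⌋₊
  have h2L : (0:ℝ) < 2 ^ L := by positivity
  have hxa : (a : ℝ) ≤ u * 2 ^ L := Nat.floor_le (by have := hu.1; positivity)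
  have hxa' : u * 2 ^ L < a + 1 := Nat.lt_floor_add_one _
  have hyb : (b : ℝ) ≤ v * 2 ^ L := Nat.floor_le (by have := hv.1; positivity)
  have hyb' : v * 2 ^ L < b + 1 := Nat.lt_floor_add_one _
  have hab : a + 1 < b := by exact_mod_cast (show (a : ℝ) + 1 < b by linarith)
  have hbL : b ≤ 2 ^ L := Nat.floor_mul_two_pow_le hv.2 L
  have hbG : b ≤ a + 1 + G := by exact_mod_cast (show (b : ℝ) ≤ a + 1 + G by linarith)
  have hcentral : (b : ℝ) / 2 ^ L - (a + 1 : ℕ) / 2 ^ L ∈ Icc 0 (v - u) := by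
    push_cast
    rw [mem_Icc, ← sub_div, le_div_iff₀ h2L, div_le_iff₀ h2L]
    constructor <;> linarith
  have hvu : v - u ∈ Icc (0:ℝ) 1 := ⟨hcentral.1.trans hcentral.2, by linarith [hu.1, hv.2]⟩
  calc dist (f u) (f v)
      ≤ dist (f u) (f (a / 2 ^ L)) + dist (f (a / 2 ^ L)) (f ((a + 1 : ℕ) / 2 ^ L))
        + dist (f ((a + 1 : ℕ) / 2 ^ L)) (f (b / 2 ^ L)) + dist (f (b / 2 ^ L)) (f v) :=
        by linarith [dist_triangle (f u) (f (a / 2 ^ L)) (f v),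
          dist_triangle4 (f (a / 2 ^ L)) (f ((a + 1 : ℕ) / 2 ^ L)) (f (b / 2 ^ L)) (f v)]
    _ ≤ τ + s * ρ (1 / 2 ^ L) + s * ρ (v - u) + τ := by
        gcongr
        · rw [dist_comm]; exact htail u hu
        · exact hgood.dist_le_of_succ hG (by omega)
        · refine (hgood _ _ hab hbL hbG).trans (mul_le_mul_of_nonneg_left ?_ hs)
          exact hmono ⟨hcentral.1, hcentral.2.trans hvu.2⟩ hvu hcentral.2
        · exact htail v hv
    _ = s * ρ (v - u) + s * ρ (1 / 2 ^ L) + 2 * τ := by ring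

lemma dist_le_of_forall_dyadicIncrementsLE {m N : ℕ} {Kt q u v : ℝ}
    (hf : ContinuousOn f (Icc 0 1)) (hmono : MonotoneOn ρ (Icc 0 1))
    (hρ : ∀ h ∈ Icc (0:ℝ) 1, 0 ≤ ρ h) (hs : 0 ≤ s) (hKt : 0 ≤ Kt) (hq0 : 0 ≤ q) (hq1 : q < 1)
    (hscale : ∀ L n : ℕ, ρ (1 / 2 ^ (L + n)) ≤ Kt * q ^ n * ρ (1 / 2 ^ L))
    (hm : 1 ≤ m) (hgood : ∀ j ≥ N, DyadicIncrementsLE f ρ s (2 ^ (m + 1)) j)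
    (hu : u ∈ Icc 0 1) (hv : v ∈ Icc 0 1) (huv : u ≠ v) (hN : |u - v| ≤ 1 / 2 ^ N) :
    dist (f u) (f v) ≤ s * (1 + (1 + 2 * Kt * q / (1 - q)) * Kt * q ^ m) * ρ |u - v| := by
  wlog hlt : u < v generalizing u v
  · rw [dist_comm, abs_sub_comm] at *
    exact this hv hu huv.symm hN (lt_of_le_of_ne (not_lt.1 hlt) huv.symm)
  have hvu : 0 < v - u := sub_pos.2 hlt
  rw [abs_sub_comm, abs_of_pos hvu] at hN ⊢
  obtain ⟨n, hn, hn'⟩ := exists_nat_pow_near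
    (one_le_one_div hvu (by linarith [hu.1, hv.2])) (one_lt_two (α := ℝ))
  rw [le_div_iff₀ hvu] at hn
  rw [div_lt_iff₀ hvu] at hn'
  have hNn : N ≤ n := by
    have : (2:ℝ) ^ N < 2 ^ (n + 1) := by
      calc (2:ℝ) ^ N ≤ 1 / (v - u) := by
            rw [le_div_iff₀ hvu]; rwa [le_div_iff₀ (by positivity), mul_comm] at hN
        _ < 2 ^ (n + 1) := by rw [div_lt_iff₀ hvu]; linarith
    have := (pow_lt_pow_iff_right₀ one_lt_two).1 this
    omega
  set L := n + 1 + m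
  have hgap : 2 ≤ (v - u) * 2 ^ L := by
    have h2m : (2:ℝ) ≤ 2 ^ m := le_self_pow₀ one_le_two (by omega)
    calc (2:ℝ) ≤ ((v - u) * 2 ^ (n + 1)) * 2 ^ m := by nlinarith
      _ = (v - u) * 2 ^ L := by rw [pow_add]; ring
  have hgapG : (v - u) * 2 ^ L ≤ (2 ^ (m + 1) : ℕ) := by
    calc (v - u) * 2 ^ L = (2 ^ n * (v - u)) * 2 ^ (m + 1) := by
          rw [show L = n + (m + 1) by omega, pow_add]; ring
      _ ≤ (2 ^ (m + 1) : ℕ) := by push_cast; nlinarith [pow_pos (two_pos (α := ℝ)) (m + 1)]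
  have hvu1 : v - u ∈ Icc (0:ℝ) 1 := ⟨hvu.le, by linarith [hu.1, hv.2]⟩
  have hρL : ρ (1 / 2 ^ L) ≤ Kt * q ^ m * ρ (v - u) := by
    refine (hscale (n + 1) m).trans (mul_le_mul_of_nonneg_left
      (hmono (one_div_two_pow_mem_Icc _) hvu1 ?_) (by positivity))
    rw [div_le_iff₀ (by positivity)]; linarith
  have hG : 1 ≤ 2 ^ (m + 1) := Nat.one_le_two_pow
  have hchain := dist_le_of_dyadicIncrementsLE hmono hs hu hv hG hgap hgapG (hgood L (by omega))
    fun w hw => dist_dyadicFloor_le hf hw hG hs hρ hq0 hq1 hscale fun j hj => hgood j (by omega)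
  have hA : 0 ≤ s * (1 + 2 * Kt * q / (1 - q)) := by
    have : 0 < 1 - q := by linarith
    positivity
  calc dist (f u) (f v)
      ≤ s * ρ (v - u) + s * (1 + 2 * Kt * q / (1 - q)) * ρ (1 / 2 ^ L) := hchain.trans_eq (by ring)
    _ ≤ s * ρ (v - u) + s * (1 + 2 * Kt * q / (1 - q)) * (Kt * q ^ m * ρ (v - u)) := by gcongr
    _ = _ := by ring

end Chaining

lemma apply_one_div_two_pow_add_le {ρ : ℝ → ℝ} {p Kt : ℝ}
    (hR : ∀ h ∈ Icc (0:ℝ) 1, ∀ z ∈ Icc (0:ℝ) 1, ρ (z * h) ≤ Kt * z ^ p * ρ h) (L n : ℕ) :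
    ρ (1 / 2 ^ (L + n)) ≤ Kt * ((1 / 2) ^ p) ^ n * ρ (1 / 2 ^ L) := by
  have h := hR _ (one_div_two_pow_mem_Icc L) _ (one_div_two_pow_mem_Icc n)
  rw [← one_div_pow (2:ℝ) n, ← Real.rpow_pow_comm (by norm_num), one_div_pow] at h
  rwa [add_comm, pow_add, ← one_div_mul_one_div]

lemma two_div_two_rpow_lt_one {κ : ℝ} (hκ : 1 < κ) : 2 / (2 : ℝ) ^ κ < 1 := by
  rw [div_lt_one (by positivity)]
  simpa using Real.rpow_lt_rpow_of_exponent_lt one_lt_two hκ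

section Probability

variable {Ω E : Type*} [MeasurableSpace Ω] [PseudoMetricSpace E] {P : Measure Ω}
  {X : Ω → ℝ → E} {ρ : ℝ → ℝ} {s K κ : ℝ}

lemma measure_not_dyadicIncrementsLE_le (hK : 0 ≤ K) (hκ : 0 ≤ κ)
    (hT : ∀ u ∈ Icc (0:ℝ) 1, ∀ v ∈ Icc (0:ℝ) 1, u ≠ v →
      P {ω | s * ρ |u - v| < dist (X ω u) (X ω v)} ≤ ENNReal.ofReal (K * |u - v| ^ κ))
    (G j : ℕ) :
    P {ω | ¬ DyadicIncrementsLE (X ω) ρ s G j} ≤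
      ENNReal.ofReal (K * G * G ^ κ * (2 / 2 ^ κ) ^ j) := by
  have h2j : (0:ℝ) < 2 ^ j := by positivity
  have hpair (i k : ℕ) (hik : i < k) (hkG : k ≤ i + G) :
      P {ω | k ≤ 2 ^ j ∧ s * ρ (k / 2 ^ j - i / 2 ^ j) < dist (X ω (i / 2 ^ j)) (X ω (k / 2 ^ j))}
        ≤ ENNReal.ofReal (K * (G / 2 ^ j) ^ κ) := by
    by_cases hk : k ≤ 2 ^ j
    · have hkR : (k : ℝ) ≤ 2 ^ j := by exact_mod_cast hk
      have hikR : (i : ℝ) < k := by exact_mod_cast hik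
      have hgap : |(i : ℝ) / 2 ^ j - k / 2 ^ j| = k / 2 ^ j - i / 2 ^ j := by
        rw [abs_sub_comm, abs_of_pos (by rw [← sub_div]; exact div_pos (by linarith) h2j)]
      have hmem (l : ℕ) (hl : (l : ℝ) ≤ 2 ^ j) : (l : ℝ) / 2 ^ j ∈ Icc (0:ℝ) 1 :=
        ⟨by positivity, (div_le_one h2j).2 hl⟩
      refine (measure_mono fun ω hω => hω.2).trans ?_
      have := hT _ (hmem i (by linarith)) _ (hmem k hkR)
        (by rw [Ne, div_left_inj' h2j.ne']; exact hikR.ne)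
      rw [hgap] at this
      refine this.trans (ENNReal.ofReal_le_ofReal (mul_le_mul_of_nonneg_left
        (Real.rpow_le_rpow (by rw [← sub_div]; exact div_nonneg (by linarith) h2j.le) ?_ hκ) hK))
      rw [← sub_div]
      gcongr
      have : (k : ℝ) ≤ i + G := by exact_mod_cast hkG
      linarith
    · simp [hk]
  have hcover : {ω | ¬ DyadicIncrementsLE (X ω) ρ s G j} ⊆ ⋃ i ∈ Finset.range (2 ^ j),
      ⋃ k ∈ Finset.Ioc i (i + G), {ω | k ≤ 2 ^ j ∧
        s * ρ (k / 2 ^ j - i / 2 ^ j) < dist (X ω (i / 2 ^ j)) (X ω (k / 2 ^ j))} := by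
    intro ω hω
    simp only [DyadicIncrementsLE, mem_ofPred_eq, not_forall, not_le] at hω
    obtain ⟨i, k, hik, hk, hkG, hlt⟩ := hω
    simp only [mem_iUnion, Finset.mem_range, Finset.mem_Ioc, mem_ofPred_eq]
    exact ⟨i, by omega, k, ⟨hik, hkG⟩, hk, hlt⟩
  calc P {ω | ¬ DyadicIncrementsLE (X ω) ρ s G j}
      ≤ ∑ i ∈ Finset.range (2 ^ j), ∑ k ∈ Finset.Ioc i (i + G),
          ENNReal.ofReal (K * (G / 2 ^ j) ^ κ) := by
        refine (measure_mono hcover).trans ((measure_biUnion_finset_le _ _).trans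
          (Finset.sum_le_sum fun i _ => (measure_biUnion_finset_le _ _).trans
            (Finset.sum_le_sum fun k hk => ?_)))
        rw [Finset.mem_Ioc] at hk
        exact hpair i k hk.1 hk.2
    _ = ((2 ^ j * G : ℕ) : ℝ≥0∞) * ENNReal.ofReal (K * (G / 2 ^ j) ^ κ) := by
        simp [Nat.card_Ioc, mul_assoc]
    _ = ENNReal.ofReal (2 ^ j * G * (K * (G / 2 ^ j) ^ κ)) := by
        rw [← ENNReal.ofReal_natCast, ← ENNReal.ofReal_mul (by positivity)]
        push_cast; rfl
    _ = ENNReal.ofReal (K * G * G ^ κ * (2 / 2 ^ κ) ^ j) := by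
        rw [Real.div_rpow (by positivity) h2j.le, ← Real.rpow_pow_comm zero_le_two, div_pow]
        field_simp

lemma measure_exists_not_dyadicIncrementsLE_le (hK : 0 ≤ K) (hκ : 1 < κ)
    (hT : ∀ u ∈ Icc (0:ℝ) 1, ∀ v ∈ Icc (0:ℝ) 1, u ≠ v →
      P {ω | s * ρ |u - v| < dist (X ω u) (X ω v)} ≤ ENNReal.ofReal (K * |u - v| ^ κ))
    (G N : ℕ) :
    P {ω | ∃ j ≥ N, ¬ DyadicIncrementsLE (X ω) ρ s G j} ≤
      ENNReal.ofReal (K * G * G ^ κ * (2 / 2 ^ κ) ^ N / (1 - 2 / 2 ^ κ)) := by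
  set r : ℝ := 2 / 2 ^ κ
  have hr0 : 0 ≤ r := by positivity
  have hr1 : r < 1 := two_div_two_rpow_lt_one hκ
  have hgeom : Summable fun i : ℕ => K * G * G ^ κ * r ^ N * r ^ i :=
    (summable_geometric_of_lt_one hr0 hr1).mul_left _
  have hcover : {ω | ∃ j ≥ N, ¬ DyadicIncrementsLE (X ω) ρ s G j} ⊆
      ⋃ i : ℕ, {ω | ¬ DyadicIncrementsLE (X ω) ρ s G (N + i)} := by
    rintro ω ⟨j, hj, hω⟩
    exact mem_iUnion.2 ⟨j - N, by rwa [Nat.add_sub_cancel' hj]⟩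
  calc P {ω | ∃ j ≥ N, ¬ DyadicIncrementsLE (X ω) ρ s G j}
      ≤ ∑' i : ℕ, ENNReal.ofReal (K * G * G ^ κ * r ^ N * r ^ i) := by
        refine (measure_mono hcover).trans ((measure_iUnion_le _).trans
          (ENNReal.tsum_le_tsum fun i => ?_))
        rw [mul_assoc _ (r ^ N), ← pow_add]
        exact measure_not_dyadicIncrementsLE_le hK (by linarith) hT G (N + i)
    _ = ENNReal.ofReal (K * G * G ^ κ * r ^ N / (1 - r)) := by
        rw [← ENNReal.ofReal_tsum_of_nonneg (fun i => by positivity) hgeom, tsum_mul_left,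
          tsum_geometric_of_lt_one hr0 hr1, div_eq_mul_inv]

end Probability

lemma tendsto_nhdsGT_zero_of_forall_Ioc_le {g : ℝ → ℝ≥0∞} {a : ℕ → ℝ≥0∞} {δ : ℕ → ℝ}
    (ha : Tendsto a atTop (𝓝 0)) (hδ : ∀ N, 0 < δ N) (hg : ∀ N, ∀ h ∈ Ioc 0 (δ N), g h ≤ a N) :
    Tendsto g (𝓝[>] 0) (𝓝 0) := by
  rw [ENNReal.tendsto_nhds_zero] at ha ⊢
  intro ε hε
  obtain ⟨N, hN⟩ := (ha ε hε).exists
  filter_upwards [Ioc_mem_nhdsGT (hδ N)] with h hh using (hg N h hh).trans hN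

lemma exists_one_le_mul_one_add_mul_pow_le {s t q : ℝ} (A : ℝ) (hst : s < t) (hq0 : 0 ≤ q)
    (hq1 : q < 1) : ∃ m : ℕ, 1 ≤ m ∧ s * (1 + A * q ^ m) ≤ t := by
  have h : Tendsto (fun m : ℕ => s * (1 + A * q ^ m)) atTop (𝓝 s) := by
    simpa using
      (((tendsto_pow_atTop_nhds_zero_of_lt_one hq0 hq1).const_mul A).const_add 1).const_mul s
  obtain ⟨m, hlt, hm⟩ := ((h.eventually (gt_mem_nhds hst)).and (eventually_ge_atTop 1)).exists
  exact ⟨m, hm, hlt.le⟩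

lemma tendsto_ofReal_mul_pow_div_one_sub {B r : ℝ} (hr0 : 0 ≤ r) (hr1 : r < 1) :
    Tendsto (fun N : ℕ => ENNReal.ofReal (B * r ^ N / (1 - r))) atTop (𝓝 0) := by
  simpa using ENNReal.tendsto_ofReal
    (((tendsto_pow_atTop_nhds_zero_of_lt_one hr0 hr1).const_mul B).div_const (1 - r))

theorem multiscale_tightness_metric_general
    {Ω : Type*} [MeasurableSpace Ω] (P : Measure Ω)
    {M : Type*} [MetricSpace M]
    (W : ℕ → Ω → ℝ → M)
    (hpath : ∀ n ω, ContinuousOn (W n ω) (Icc 0 1))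
    (ρ₀ : ℝ → ℝ)
    (hρ₀mono : MonotoneOn ρ₀ (Icc 0 1))
    (hρ₀nonneg : ∀ h ∈ Icc (0:ℝ) 1, 0 ≤ ρ₀ h)
    (C : ℝ) (hC : 0 < C)
    (hT : ∀ t > C, ∃ κ > (1:ℝ), ∃ K > (0:ℝ),
      ∀ n : ℕ, ∀ u ∈ Icc (0:ℝ) 1, ∀ v ∈ Icc (0:ℝ) 1, u ≠ v →
        P {ω | t * ρ₀ |u - v| < dist (W n ω u) (W n ω v)}
          ≤ ENNReal.ofReal (K * |u - v| ^ κ))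
    (hR : ∃ p > (0:ℝ), ∃ Kt > (0:ℝ), ∀ h ∈ Icc (0:ℝ) 1, ∀ z ∈ Icc (0:ℝ) 1,
      ρ₀ (z * h) ≤ Kt * z ^ p * ρ₀ h) :
    ∀ t > C,
      Tendsto
        (fun h : ℝ => ⨆ n : ℕ,
          P {ω | ∃ u ∈ Icc (0:ℝ) 1, ∃ v ∈ Icc (0:ℝ) 1,
            u ≠ v ∧ |u - v| ≤ h ∧ t * ρ₀ |u - v| < dist (W n ω u) (W n ω v)})
        (𝓝[>] (0:ℝ)) (𝓝 0) := by
  intro t ht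
  obtain ⟨p, hp, Kt, hKt, hR⟩ := hR
  obtain ⟨s, hCs, hst⟩ := exists_between ht
  obtain ⟨κ, hκ, K, hK, hTs⟩ := hT s hCs
  set q : ℝ := (1 / 2) ^ p
  have hq0 : 0 ≤ q := by positivity
  have hq1 : q < 1 := Real.rpow_lt_one (by norm_num) (by norm_num) hp
  obtain ⟨m, hm, hmt⟩ := exists_one_le_mul_one_add_mul_pow_le ((1 + 2 * Kt * q / (1 - q)) * Kt)
    hst hq0 hq1
  set G := 2 ^ (m + 1)
  refine tendsto_nhdsGT_zero_of_forall_Ioc_le (δ := fun N => 1 / 2 ^ N)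
    (tendsto_ofReal_mul_pow_div_one_sub (B := K * G * G ^ κ) (by positivity)
      (two_div_two_rpow_lt_one hκ)) (fun N => by positivity)
    fun N h hh => iSup_le fun n => (measure_mono ?_).trans
      (measure_exists_not_dyadicIncrementsLE_le hK.le hκ (hTs n) G N)
  rintro ω ⟨u, hu, v, hv, huv, hle, hlt⟩
  by_contra hbad
  have hgood : ∀ j ≥ N, DyadicIncrementsLE (W n ω) ρ₀ s G j :=
    fun j hj => by_contra fun h => hbad ⟨j, hj, h⟩
  have huv1 : |u - v| ∈ Icc (0:ℝ) 1 :=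
    ⟨abs_nonneg _, abs_sub_le_iff.2 ⟨by linarith [hu.2, hv.1], by linarith [hu.1, hv.2]⟩⟩
  have hdist := dist_le_of_forall_dyadicIncrementsLE (hpath n ω) hρ₀mono hρ₀nonneg (by linarith)
    hKt.le hq0 hq1 (apply_one_div_two_pow_add_le hR) hm hgood hu hv huv (hle.trans hh.2)
  nlinarith [hρ₀nonneg _ huv1]

/-- Theorem (metric-space version of the multiscale tightness bound):
under the tail condition (T-M) and the scaling condition (R) on ρ₀, the
multiscale modulus of continuity of the processes W_n is uniformly small
over small scales, beyond the threshold C. -/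
theorem multiscale_tightness_metric
    {Ω : Type*} [MeasurableSpace Ω] (P : Measure Ω) [IsProbabilityMeasure P]
    {M : Type*} [MetricSpace M]
    (W : ℕ → Ω → ℝ → M)
    (hpath : ∀ n ω, ContinuousOn (W n ω) (Icc 0 1))
    (ρ₀ : ℝ → ℝ)
    (hρ₀mono : MonotoneOn ρ₀ (Icc 0 1))
    (hρ₀zero : ρ₀ 0 = 0)
    (hρ₀nonneg : ∀ h ∈ Icc (0:ℝ) 1, 0 ≤ ρ₀ h)
    (hρ₀pos : ∀ h : ℝ, 0 < h → h ≤ 1 → 0 < ρ₀ h)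
    (C : ℝ) (hC : 0 < C)
    (hT : ∀ t > C, ∃ κ > (1:ℝ), ∃ K > (0:ℝ),
      ∀ n : ℕ, ∀ u ∈ Icc (0:ℝ) 1, ∀ v ∈ Icc (0:ℝ) 1, u ≠ v →
        P {ω | t * ρ₀ |u - v| < dist (W n ω u) (W n ω v)}
          ≤ ENNReal.ofReal (K * |u - v| ^ κ))
    (hR : ∃ p > (0:ℝ), ∃ Kt > (0:ℝ), ∀ h ∈ Icc (0:ℝ) 1, ∀ z ∈ Icc (0:ℝ) 1,
      ρ₀ (z * h) ≤ Kt * z ^ p * ρ₀ h) :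
    ∀ t > C,
      Tendsto
        (fun h : ℝ => ⨆ n : ℕ,
          P {ω | ∃ u ∈ Icc (0:ℝ) 1, ∃ v ∈ Icc (0:ℝ) 1,
            u ≠ v ∧ |u - v| ≤ h ∧ t * ρ₀ |u - v| < dist (W n ω u) (W n ω v)})
        (𝓝[>] (0:ℝ)) (𝓝 0) :=
  multiscale_tightness_metric_general P W hpath ρ₀ hρ₀mono hρ₀nonneg C hC hT hR

end
end

section
/- Let W_n (n ∈ ℕ) be real-valued stochastic processes on [0,1] with continuous sample paths, and let ρ₀ : [0,1] → [0,∞) be increasing with ρ₀(0) = 0 and ρ₀(h) > 0 for h > 0. Assume: (T) there exists C > 0 such that for every t > C there are κ(t) > 1 and K(t) > 0 with P(|W_n(u) − W_n(v)| > t·ρ₀(|u−v|)) ≤ K(t)·|u−v|^{κ(t)} for all n ∈ ℕ and all u ≠ v in [0,1]; and (R) there exist p > 0 and K̃ > 0 such that ρ₀(z·h) ≤ K̃·z^p·ρ₀(h) for all h, z ∈ [0,1]. Then for every modulus of continuity ρ with ρ(h)/ρ₀(h) → ∞ as h → 0, the sequence of Hölder seminorms |W_n|_ρ is stochastically bounded: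 lim_{M→∞} sup_n P(|W_n|_ρ > M) = 0. -/
open MeasureTheory ProbabilityTheory Filter Topology Set
open scoped ENNReal NNReal

noncomputable section

/-!
Kolmogorov–Chentsov chaining. Fix `t = C + 1` and call dyadic level `j` good for a path if its
`2 ^ j` increments between neighbouring points `k / 2 ^ j` are at most `t * ρ₀ (2⁻¹ ^ j)`.
By (T) and a union bound, level `j` is bad with probability at most
`2 ^ j * K * 2 ^ (-κ j) = K * r ^ j` with `r = 2 ^ (1 - κ) < 1`, so all levels `j ≥ J` are good
outside an event of probability `K * r ^ J / (1 - r)`, uniformly in `n`. On that event, chaining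
through the dyadic approximations of `u` and `v` (whose errors decay geometrically by (R)) gives
`|W u - W v| ≤ c_J * ρ₀ |u - v|` with `c_J` independent of `n`, and `ρ₀ ≤ S * ρ` on `(0, 1]`
since `ρ / ρ₀ → ∞` at `0`.
-/

namespace HolderChaining

def dyadic (j k : ℕ) : ℝ := k / 2 ^ j

lemma dyadic_succ_sub_dyadic (j k : ℕ) : dyadic j (k + 1) - dyadic j k = 2⁻¹ ^ j := by
  simp only [dyadic, Nat.cast_add, Nat.cast_one, inv_pow]
  ring

lemma dyadic_mem_Icc {j k : ℕ} (hk : k ≤ 2 ^ j) : dyadic j k ∈ Icc (0 : ℝ) 1 :=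
  ⟨by unfold dyadic; positivity, div_le_one_of_le₀ (by exact_mod_cast hk) (by positivity)⟩

lemma dyadic_succ_two_mul (j k : ℕ) : dyadic (j + 1) (2 * k) = dyadic j k := by
  simp only [dyadic, Nat.cast_mul, Nat.cast_ofNat, pow_succ]
  field_simp

lemma floor_mul_two_pow_le {u : ℝ} (hu : u ∈ Icc (0 : ℝ) 1) (j : ℕ) : ⌊u * 2 ^ j⌋₊ ≤ 2 ^ j :=
  Nat.floor_le_of_le (by push_cast; nlinarith [hu.2, pow_pos (two_pos : (0 : ℝ) < 2) j])

lemma floor_mul_two_pow_succ {u : ℝ} (hu : 0 ≤ u) (j : ℕ) :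
    ⌊u * 2 ^ (j + 1)⌋₊ = 2 * ⌊u * 2 ^ j⌋₊ ∨ ⌊u * 2 ^ (j + 1)⌋₊ = 2 * ⌊u * 2 ^ j⌋₊ + 1 := by
  have h₁ : (⌊u * 2 ^ j⌋₊ : ℝ) ≤ u * 2 ^ j := Nat.floor_le (by positivity)
  have h₂ : u * 2 ^ j < ⌊u * 2 ^ j⌋₊ + 1 := Nat.lt_floor_add_one _
  have hle : 2 * ⌊u * 2 ^ j⌋₊ ≤ ⌊u * 2 ^ (j + 1)⌋₊ :=
    Nat.le_floor (by push_cast; rw [pow_succ]; linarith)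
  have hlt : ⌊u * 2 ^ (j + 1)⌋₊ < 2 * ⌊u * 2 ^ j⌋₊ + 2 :=
    (Nat.floor_lt (by positivity)).2 (by push_cast; rw [pow_succ]; linarith)
  omega

lemma abs_sub_dyadic_floor_le {u : ℝ} (hu : 0 ≤ u) (j : ℕ) :
    |u - dyadic j ⌊u * 2 ^ j⌋₊| ≤ 2⁻¹ ^ j := by
  have h₁ : (⌊u * 2 ^ j⌋₊ : ℝ) ≤ u * 2 ^ j := Nat.floor_le (by positivity)
  have h₂ : u * 2 ^ j < ⌊u * 2 ^ j⌋₊ + 1 := Nat.lt_floor_add_one _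
  have hdiff : u - dyadic j ⌊u * 2 ^ j⌋₊ = (u * 2 ^ j - ⌊u * 2 ^ j⌋₊) * 2⁻¹ ^ j := by
    rw [dyadic, inv_pow]; field_simp
  rw [hdiff, abs_mul, abs_of_pos (by positivity : (0 : ℝ) < 2⁻¹ ^ j)]
  exact mul_le_of_le_one_left (by positivity) (abs_le.2 ⟨by linarith, by linarith⟩)

lemma tendsto_dyadic_floor {u : ℝ} (hu : 0 ≤ u) :
    Tendsto (fun j => dyadic j ⌊u * 2 ^ j⌋₊) atTop (𝓝 u) := by
  refine tendsto_iff_norm_sub_tendsto_zero.2 (squeeze_zero_norm (fun j => ?_)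
    (tendsto_pow_atTop_nhds_zero_of_lt_one (by norm_num : (0 : ℝ) ≤ 2⁻¹) (by norm_num)))
  rw [norm_norm, norm_sub_rev]
  exact abs_sub_dyadic_floor_le hu j

lemma abs_natFloor_sub_natFloor_le {x y : ℝ} (hx : 0 ≤ x) (hy : 0 ≤ y) :
    |(⌊x⌋₊ : ℝ) - ⌊y⌋₊| ≤ |x - y| + 1 := by
  have := Nat.floor_le hx; have := Nat.floor_le hy
  have := Nat.lt_floor_add_one x; have := Nat.lt_floor_add_one y
  rw [abs_le]; constructor <;> linarith [le_abs_self (x - y), neg_abs_le (x - y)]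

def DyadicIncrementsLE (f : ℝ → ℝ) (j : ℕ) (b : ℝ) : Prop :=
  ∀ k < 2 ^ j, |f (dyadic j (k + 1)) - f (dyadic j k)| ≤ b

namespace DyadicIncrementsLE

variable {f : ℝ → ℝ} {j : ℕ} {b : ℝ}

lemma nonneg (h : DyadicIncrementsLE f j b) : 0 ≤ b :=
  (abs_nonneg _).trans (h 0 (by positivity))

lemma mono {b' : ℝ} (h : DyadicIncrementsLE f j b) (hb : b ≤ b') : DyadicIncrementsLE f j b' :=
  fun k hk => (h k hk).trans hb

lemma abs_sub_le (h : DyadicIncrementsLE f j b) {a c : ℕ} (ha : a ≤ 2 ^ j) (hc : c ≤ 2 ^ j) :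
    |f (dyadic j a) - f (dyadic j c)| ≤ |(a : ℝ) - c| * b := by
  wlog hac : a ≤ c generalizing a c
  · rw [abs_sub_comm, abs_sub_comm (a : ℝ)]
    exact this hc ha (le_of_not_ge hac)
  calc |f (dyadic j a) - f (dyadic j c)| = dist (f (dyadic j a)) (f (dyadic j c)) := rfl
    _ ≤ ∑ i ∈ Finset.Ico a c, dist (f (dyadic j i)) (f (dyadic j (i + 1))) :=
      dist_le_Ico_sum_dist (fun i => f (dyadic j i)) hac
    _ ≤ ∑ _i ∈ Finset.Ico a c, b := Finset.sum_le_sum fun i hi => by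
      rw [dist_comm]; exact h i (by have := (Finset.mem_Ico.1 hi).2; omega)
    _ = |(a : ℝ) - c| * b := by
      rw [Finset.sum_const, Nat.card_Ico, nsmul_eq_mul, abs_sub_comm,
        abs_of_nonneg (sub_nonneg.2 (Nat.cast_le.2 hac)), Nat.cast_sub hac]

lemma abs_sub_floor_succ_le (h : DyadicIncrementsLE f (j + 1) b) {u : ℝ}
    (hu : u ∈ Icc (0 : ℝ) 1) :
    |f (dyadic (j + 1) ⌊u * 2 ^ (j + 1)⌋₊) - f (dyadic j ⌊u * 2 ^ j⌋₊)| ≤ b := by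
  rw [← dyadic_succ_two_mul j ⌊u * 2 ^ j⌋₊]
  have hle := floor_mul_two_pow_le hu (j + 1)
  rcases floor_mul_two_pow_succ hu.1 j with hfl | hfl <;> rw [hfl] at hle ⊢
  · simpa using h.nonneg
  · exact h (2 * ⌊u * 2 ^ j⌋₊) (by omega)

end DyadicIncrementsLE

lemma abs_sub_dyadic_floor_le_of_geometric {f : ℝ → ℝ} (hf : ContinuousOn f (Icc 0 1))
    {u a q : ℝ} (hu : u ∈ Icc (0 : ℝ) 1) (hq : q < 1) {m : ℕ}
    (H : ∀ i, DyadicIncrementsLE f (m + i + 1) (a * q ^ i)) :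
    |f u - f (dyadic m ⌊u * 2 ^ m⌋₊)| ≤ a / (1 - q) := by
  have hlevels : Tendsto (fun i => m + i) atTop atTop := by
    simpa only [add_comm m] using tendsto_add_atTop_nat m
  have hlim : Tendsto (fun i => f (dyadic (m + i) ⌊u * 2 ^ (m + i)⌋₊)) atTop (𝓝 (f u)) :=
    (hf u hu).tendsto.comp (tendsto_nhdsWithin_iff.2
      ⟨(tendsto_dyadic_floor hu.1).comp hlevels,
        Eventually.of_forall fun _ => dyadic_mem_Icc (floor_mul_two_pow_le hu _)⟩)
  rw [abs_sub_comm]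
  exact dist_le_of_le_geometric_of_tendsto₀ q a hq
    (fun i => by rw [dist_comm]; exact (H i).abs_sub_floor_succ_le hu) hlim

lemma two_inv_pow_mem_Icc (j : ℕ) : (2 : ℝ)⁻¹ ^ j ∈ Icc (0 : ℝ) 1 :=
  ⟨by positivity, pow_le_one₀ (by norm_num) (by norm_num)⟩

section Chaining

variable {ρ₀ f : ℝ → ℝ} {t Kt p : ℝ}

lemma abs_sub_le_of_dyadicIncrementsLE (hf : ContinuousOn f (Icc 0 1)) (ht : 0 ≤ t)
    (hKt : 0 ≤ Kt) (hp : 0 < p) (hρ₀ : MonotoneOn ρ₀ (Icc 0 1))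
    (hR : ∀ h ∈ Icc (0 : ℝ) 1, ∀ z ∈ Icc (0 : ℝ) 1, ρ₀ (z * h) ≤ Kt * z ^ p * ρ₀ h)
    {L : ℕ} (H : ∀ j ≥ L, DyadicIncrementsLE f j (t * ρ₀ (2⁻¹ ^ j)))
    {u v : ℝ} (hu : u ∈ Icc (0 : ℝ) 1) (hv : v ∈ Icc (0 : ℝ) 1) :
    |f u - f v| ≤ (|u - v| * 2 ^ L + 1 + 2 * (Kt / (1 - 2⁻¹ ^ p))) * (t * ρ₀ (2⁻¹ ^ L)) := by
  set q : ℝ := 2⁻¹ ^ p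
  have hq : q < 1 := Real.rpow_lt_one (by norm_num) (by norm_num) hp
  set b := t * ρ₀ (2⁻¹ ^ L)
  have hb : 0 ≤ b := (H L le_rfl).nonneg
  have hgeom : ∀ i, DyadicIncrementsLE f (L + i + 1) (t * Kt * ρ₀ (2⁻¹ ^ (L + 1)) * q ^ i) := by
    intro i
    refine (H _ (by omega)).mono ?_
    have hRi := hR _ (two_inv_pow_mem_Icc (L + 1)) _ (two_inv_pow_mem_Icc i)
    rw [← pow_add, ← Real.rpow_pow_comm (by norm_num), add_comm i, add_right_comm L 1 i] at hRi
    calc t * ρ₀ (2⁻¹ ^ (L + i + 1)) ≤ t * (Kt * q ^ i * ρ₀ (2⁻¹ ^ (L + 1))) := by gcongr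
      _ = t * Kt * ρ₀ (2⁻¹ ^ (L + 1)) * q ^ i := by ring
  have happrox : ∀ w ∈ Icc (0 : ℝ) 1,
      |f w - f (dyadic L ⌊w * 2 ^ L⌋₊)| ≤ Kt / (1 - q) * b := by
    intro w hw
    refine (abs_sub_dyadic_floor_le_of_geometric hf hw hq hgeom).trans ?_
    have hρ₀L : ρ₀ (2⁻¹ ^ (L + 1)) ≤ ρ₀ (2⁻¹ ^ L) :=
      hρ₀ (two_inv_pow_mem_Icc _) (two_inv_pow_mem_Icc _)
        (pow_le_pow_of_le_one (by norm_num) (by norm_num) (by omega))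
    calc t * Kt * ρ₀ (2⁻¹ ^ (L + 1)) / (1 - q) = Kt * (t * ρ₀ (2⁻¹ ^ (L + 1))) / (1 - q) := by
          ring
      _ ≤ Kt * b / (1 - q) := by
          gcongr
          exact mul_le_mul_of_nonneg_left hρ₀L ht
      _ = Kt / (1 - q) * b := by ring
  have hmid : |f (dyadic L ⌊u * 2 ^ L⌋₊) - f (dyadic L ⌊v * 2 ^ L⌋₊)| ≤
      (|u - v| * 2 ^ L + 1) * b := by
    refine ((H L le_rfl).abs_sub_le (floor_mul_two_pow_le hu L)
      (floor_mul_two_pow_le hv L)).trans (mul_le_mul_of_nonneg_right ?_ hb)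
    have := abs_natFloor_sub_natFloor_le (x := u * 2 ^ L) (y := v * 2 ^ L)
      (mul_nonneg hu.1 (by positivity)) (mul_nonneg hv.1 (by positivity))
    rwa [← sub_mul, abs_mul, abs_of_pos (by positivity : (0 : ℝ) < 2 ^ L)] at this
  have htri₁ := abs_sub_le (f u) (f (dyadic L ⌊u * 2 ^ L⌋₊)) (f v)
  have htri₂ := abs_sub_le (f (dyadic L ⌊u * 2 ^ L⌋₊)) (f (dyadic L ⌊v * 2 ^ L⌋₊)) (f v)
  have hsymm := abs_sub_comm (f (dyadic L ⌊v * 2 ^ L⌋₊)) (f v)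
  linarith [happrox u hu, happrox v hv]

lemma exists_level_ge {h : ℝ} (h0 : 0 < h) (h1 : h ≤ 1) (J : ℕ) :
    ∃ L ≥ J, (2 : ℝ)⁻¹ ^ L ≤ h ∧ h * 2 ^ L ≤ 2 ^ J + 2 := by
  obtain ⟨ℓ, hlt, hle⟩ :=
    exists_nat_pow_near_of_lt_one h0 h1 (by norm_num : (0 : ℝ) < 2⁻¹) (by norm_num)
  refine ⟨max J (ℓ + 1), le_max_left _ _,
    (pow_le_pow_of_le_one (by norm_num) (by norm_num) (le_max_right _ _)).trans hlt.le, ?_⟩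
  have h2J : (0 : ℝ) < 2 ^ J := by positivity
  rcases le_total J (ℓ + 1) with hJ | hJ
  · rw [max_eq_right hJ]
    calc h * 2 ^ (ℓ + 1) ≤ 2⁻¹ ^ ℓ * 2 ^ (ℓ + 1) := by gcongr
      _ = 2 := by rw [inv_pow, pow_succ]; field_simp
      _ ≤ 2 ^ J + 2 := by linarith
  · rw [max_eq_left hJ]
    linarith [mul_le_of_le_one_left h2J.le h1]

lemma holderSemi_le_of_dyadicIncrementsLE {ρ : ℝ → ℝ} {S : ℝ} {J : ℕ}
    (hf : ContinuousOn f (Icc 0 1)) (ht : 0 ≤ t) (hKt : 0 ≤ Kt) (hp : 0 < p)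
    (hρ₀ : MonotoneOn ρ₀ (Icc 0 1))
    (hR : ∀ h ∈ Icc (0 : ℝ) 1, ∀ z ∈ Icc (0 : ℝ) 1, ρ₀ (z * h) ≤ Kt * z ^ p * ρ₀ h)
    (hρ : ∀ h : ℝ, 0 < h → h ≤ 1 → 0 < ρ h) (hS : ∀ h : ℝ, 0 < h → h ≤ 1 → ρ₀ h ≤ S * ρ h)
    (H : ∀ j ≥ J, DyadicIncrementsLE f j (t * ρ₀ (2⁻¹ ^ j))) :
    holderSemi ρ f ≤ ENNReal.ofReal ((2 ^ J + 3 + 2 * (Kt / (1 - 2⁻¹ ^ p))) * t * S) := by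
  refine iSup_le fun u => iSup_le fun v => iSup_le fun ⟨hu, hv, huv⟩ =>
    ENNReal.ofReal_le_ofReal ?_
  set h := |u - v|
  have h0 : 0 < h := abs_pos.2 (sub_ne_zero.2 huv)
  have h1 : h ≤ 1 := abs_sub_le_iff.2 ⟨by linarith [hu.2, hv.1], by linarith [hu.1, hv.2]⟩
  obtain ⟨L, hJL, hLh, hhL⟩ := exists_level_ge h0 h1 J
  have hA : 0 ≤ Kt / (1 - 2⁻¹ ^ p) :=
    div_nonneg hKt (by linarith [Real.rpow_lt_one (by norm_num : (0 : ℝ) ≤ 2⁻¹) (by norm_num) hp])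
  have hbL : 0 ≤ t * ρ₀ (2⁻¹ ^ L) := (H L hJL).nonneg
  rw [div_le_iff₀ (hρ h h0 h1)]
  calc |f u - f v| ≤ (h * 2 ^ L + 1 + 2 * (Kt / (1 - 2⁻¹ ^ p))) * (t * ρ₀ (2⁻¹ ^ L)) :=
        abs_sub_le_of_dyadicIncrementsLE hf ht hKt hp hρ₀ hR (fun j hj => H j (hJL.trans hj)) hu hv
    _ ≤ (2 ^ J + 3 + 2 * (Kt / (1 - 2⁻¹ ^ p))) * (t * ρ₀ h) := by
        gcongr ?_ * (_ * ?_)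
        · linarith
        · exact hρ₀ (two_inv_pow_mem_Icc L) ⟨h0.le, h1⟩ hLh
    _ ≤ (2 ^ J + 3 + 2 * (Kt / (1 - 2⁻¹ ^ p))) * (t * (S * ρ h)) := by
        gcongr
        exact hS h h0 h1
    _ = (2 ^ J + 3 + 2 * (Kt / (1 - 2⁻¹ ^ p))) * t * S * ρ h := by ring

end Chaining

lemma exists_le_mul_of_tendsto_div_atTop {ρ₀ ρ : ℝ → ℝ} (hρ₀ : MonotoneOn ρ₀ (Icc 0 1))
    (hρ : IsModulus ρ) (hlim : Tendsto (fun h => ρ h / ρ₀ h) (𝓝[>] 0) atTop) :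
    ∃ S : ℝ, ∀ h : ℝ, 0 < h → h ≤ 1 → ρ₀ h ≤ S * ρ h := by
  obtain ⟨δ, hδ, hsmall⟩ := mem_nhdsGT_iff_exists_Ioc_subset.1 (hlim.eventually_ge_atTop 1)
  set δ' := min δ 1
  have hδ' : 0 < δ' := lt_min hδ one_pos
  have hρδ' := hρ.pos δ' hδ' (min_le_right _ _)
  set S := max 1 (ρ₀ 1 / ρ δ')
  have hS : 1 ≤ S := le_max_left _ _
  refine ⟨S, fun h h0 h1 => ?_⟩
  have hρh := hρ.pos h h0 h1
  rcases le_or_gt h δ' with hle | hlt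
  · have hratio : 1 ≤ ρ h / ρ₀ h := hsmall ⟨h0, hle.trans (min_le_left _ _)⟩
    have : ρ₀ h ≤ ρ h := by
      rcases le_or_gt (ρ₀ h) 0 with hneg | hpos
      · linarith
      · rwa [one_le_div hpos] at hratio
    exact this.trans (le_mul_of_one_le_left hρh.le hS)
  · calc ρ₀ h ≤ ρ₀ 1 := hρ₀ ⟨h0.le, h1⟩ ⟨zero_le_one, le_rfl⟩ h1
      _ = ρ₀ 1 / ρ δ' * ρ δ' := (div_mul_cancel₀ _ hρδ'.ne').symm
      _ ≤ S * ρ δ' := by gcongr; exact le_max_right _ _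
      _ ≤ S * ρ h := by
        gcongr
        exact hρ.mono ⟨hδ'.le, min_le_right _ _⟩ ⟨h0.le, h1⟩ hlt.le

section Probability

variable {Ω : Type*} [MeasurableSpace Ω] {P : Measure Ω} {X : Ω → ℝ → ℝ} {ρ₀ : ℝ → ℝ}
  {t κ K : ℝ}

lemma measure_not_dyadicIncrementsLE_le
    (hX : ∀ u ∈ Icc (0 : ℝ) 1, ∀ v ∈ Icc (0 : ℝ) 1, u ≠ v →
      P {ω | t * ρ₀ |u - v| < |X ω u - X ω v|} ≤ ENNReal.ofReal (K * |u - v| ^ κ))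
    (j : ℕ) :
    P {ω | ¬ DyadicIncrementsLE (X ω) j (t * ρ₀ (2⁻¹ ^ j))} ≤
      ENNReal.ofReal (K * (2 ^ (1 - κ)) ^ j) := by
  have hdist : ∀ k : ℕ, |dyadic j (k + 1) - dyadic j k| = 2⁻¹ ^ j := fun k => by
    rw [dyadic_succ_sub_dyadic, abs_of_pos (by positivity)]
  have hsub : {ω | ¬ DyadicIncrementsLE (X ω) j (t * ρ₀ (2⁻¹ ^ j))} ⊆
      ⋃ k ∈ Finset.range (2 ^ j), {ω | t * ρ₀ |dyadic j (k + 1) - dyadic j k| <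
        |X ω (dyadic j (k + 1)) - X ω (dyadic j k)|} := by
    intro ω hω
    simp only [DyadicIncrementsLE, not_forall, not_le, mem_ofPred_eq] at hω
    obtain ⟨k, hk, hlt⟩ := hω
    exact mem_biUnion (Finset.mem_range.2 hk) (by rw [mem_ofPred_eq, hdist]; exact hlt)
  have hpow : (2 : ℝ) ^ j * (2⁻¹ ^ j) ^ κ = (2 ^ (1 - κ)) ^ j := by
    rw [← Real.rpow_pow_comm (by norm_num), ← mul_pow, Real.rpow_sub two_pos, Real.rpow_one,
      Real.inv_rpow (by norm_num), div_eq_mul_inv]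
  calc P {ω | ¬ DyadicIncrementsLE (X ω) j (t * ρ₀ (2⁻¹ ^ j))}
      ≤ ∑ k ∈ Finset.range (2 ^ j), P {ω | t * ρ₀ |dyadic j (k + 1) - dyadic j k| <
          |X ω (dyadic j (k + 1)) - X ω (dyadic j k)|} :=
        (measure_mono hsub).trans (measure_biUnion_finset_le _ _)
    _ ≤ ∑ _k ∈ Finset.range (2 ^ j), ENNReal.ofReal (K * (2⁻¹ ^ j) ^ κ) :=
        Finset.sum_le_sum fun k hk => by
          have hk := Finset.mem_range.1 hk
          have hne : dyadic j (k + 1) ≠ dyadic j k :=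
            sub_ne_zero.1 (by rw [dyadic_succ_sub_dyadic]; positivity)
          simpa only [hdist] using hX _ (dyadic_mem_Icc hk) _ (dyadic_mem_Icc hk.le) hne
    _ = ENNReal.ofReal (K * (2 ^ (1 - κ)) ^ j) := by
        rw [Finset.sum_const, Finset.card_range, nsmul_eq_mul, ← hpow,
          ← ENNReal.ofReal_natCast, ← ENNReal.ofReal_mul (by positivity)]
        push_cast
        ring_nf

lemma measure_exists_not_dyadicIncrementsLE_le (hκ : 1 < κ) (hK : 0 ≤ K)
    (hX : ∀ u ∈ Icc (0 : ℝ) 1, ∀ v ∈ Icc (0 : ℝ) 1, u ≠ v →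
      P {ω | t * ρ₀ |u - v| < |X ω u - X ω v|} ≤ ENNReal.ofReal (K * |u - v| ^ κ))
    (J : ℕ) :
    P {ω | ∃ j ≥ J, ¬ DyadicIncrementsLE (X ω) j (t * ρ₀ (2⁻¹ ^ j))} ≤
      ENNReal.ofReal (K * (2 ^ (1 - κ)) ^ J / (1 - 2 ^ (1 - κ))) := by
  set r : ℝ := 2 ^ (1 - κ)
  have hr : r < 1 := Real.rpow_lt_one_of_one_lt_of_neg one_lt_two (by linarith)
  have hsub : {ω | ∃ j ≥ J, ¬ DyadicIncrementsLE (X ω) j (t * ρ₀ (2⁻¹ ^ j))} ⊆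
      ⋃ i : ℕ, {ω | ¬ DyadicIncrementsLE (X ω) (i + J) (t * ρ₀ (2⁻¹ ^ (i + J)))} := by
    rintro ω ⟨j, hj, hbad⟩
    exact mem_iUnion.2 ⟨j - J, by rwa [Nat.sub_add_cancel hj]⟩
  have hsum : HasSum (fun i : ℕ => K * r ^ (i + J)) (K * r ^ J / (1 - r)) := by
    have hterm : (fun i : ℕ => K * r ^ (i + J)) = fun i => K * r ^ J * r ^ i :=
      funext fun i => by rw [pow_add]; ring
    rw [hterm, div_eq_mul_inv]
    exact (hasSum_geometric_of_lt_one (by positivity) hr).mul_left _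
  calc P {ω | ∃ j ≥ J, ¬ DyadicIncrementsLE (X ω) j (t * ρ₀ (2⁻¹ ^ j))}
      ≤ ∑' i : ℕ, P {ω | ¬ DyadicIncrementsLE (X ω) (i + J) (t * ρ₀ (2⁻¹ ^ (i + J)))} :=
        (measure_mono hsub).trans (measure_iUnion_le _)
    _ ≤ ∑' i : ℕ, ENNReal.ofReal (K * r ^ (i + J)) :=
        ENNReal.tsum_le_tsum fun i => measure_not_dyadicIncrementsLE_le hX _
    _ = ENNReal.ofReal (K * r ^ J / (1 - r)) := by
        rw [← ENNReal.ofReal_tsum_of_nonneg (fun i => by positivity) hsum.summable,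
          hsum.tsum_eq]

end Probability

end HolderChaining

open HolderChaining in
theorem holder_seminorm_stochastically_bounded_general
    {Ω : Type*} [MeasurableSpace Ω] (P : Measure Ω) [IsProbabilityMeasure P]
    (W : ℕ → Ω → ℝ → ℝ)
    (hpath : ∀ n ω, ContinuousOn (W n ω) (Icc 0 1))
    (ρ₀ : ℝ → ℝ)
    (hρ₀mono : MonotoneOn ρ₀ (Icc 0 1))
    (C : ℝ) (hC : 0 < C)
    (hT : ∀ t > C, ∃ κ > (1:ℝ), ∃ K > (0:ℝ),
      ∀ n : ℕ, ∀ u ∈ Icc (0:ℝ) 1, ∀ v ∈ Icc (0:ℝ) 1, u ≠ v →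
        P {ω | t * ρ₀ |u - v| < |W n ω u - W n ω v|}
          ≤ ENNReal.ofReal (K * |u - v| ^ κ))
    (hR : ∃ p > (0:ℝ), ∃ Kt > (0:ℝ), ∀ h ∈ Icc (0:ℝ) 1, ∀ z ∈ Icc (0:ℝ) 1,
      ρ₀ (z * h) ≤ Kt * z ^ p * ρ₀ h) :
    ∀ ρ : ℝ → ℝ, IsModulus ρ →
      Tendsto (fun h => ρ h / ρ₀ h) (𝓝[>] (0:ℝ)) atTop →
      Tendsto
        (fun M : ℝ => ⨆ n : ℕ, P {ω | ENNReal.ofReal M < holderSemi ρ (W n ω)})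
        atTop (𝓝 0) := by
  intro ρ hρ hlim
  obtain ⟨κ, hκ, K, hK, hTail⟩ := hT (C + 1) (by linarith)
  obtain ⟨p, hp, Kt, hKt, hR⟩ := hR
  obtain ⟨S, hS⟩ := exists_le_mul_of_tendsto_div_atTop hρ₀mono hρ hlim
  have htail : Tendsto (fun J : ℕ => ENNReal.ofReal (K * (2 ^ (1 - κ)) ^ J / (1 - 2 ^ (1 - κ))))
      atTop (𝓝 0) := by
    rw [← ENNReal.ofReal_zero]
    refine ENNReal.tendsto_ofReal ?_
    simpa using ((tendsto_pow_atTop_nhds_zero_of_lt_one (by positivity)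
      (Real.rpow_lt_one_of_one_lt_of_neg one_lt_two (by linarith))).const_mul K).div_const _
  rw [ENNReal.tendsto_atTop_zero]
  intro ε hε
  obtain ⟨J, hJ⟩ := ENNReal.tendsto_atTop_zero.1 htail ε hε
  refine ⟨(2 ^ J + 3 + 2 * (Kt / (1 - 2⁻¹ ^ p))) * (C + 1) * S,
    fun M hM => iSup_le fun n => ?_⟩
  calc P {ω | ENNReal.ofReal M < holderSemi ρ (W n ω)}
      ≤ P {ω | ∃ j ≥ J, ¬ DyadicIncrementsLE (W n ω) j ((C + 1) * ρ₀ (2⁻¹ ^ j))} := by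
        refine measure_mono fun ω hω => ?_
        by_contra hnone
        have hgood : ∀ j ≥ J, DyadicIncrementsLE (W n ω) j ((C + 1) * ρ₀ (2⁻¹ ^ j)) :=
          fun j hj => not_not.1 fun hbad => hnone ⟨j, hj, hbad⟩
        exact not_le.2 hω ((holderSemi_le_of_dyadicIncrementsLE (hpath n ω) (by linarith)
          hKt.le hp hρ₀mono hR hρ.pos hS hgood).trans (ENNReal.ofReal_le_ofReal hM))
    _ ≤ ENNReal.ofReal (K * (2 ^ (1 - κ)) ^ J / (1 - 2 ^ (1 - κ))) :=
        measure_exists_not_dyadicIncrementsLE_le hκ hK.le (hTail n) J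
    _ ≤ ε := hJ J le_rfl

/-- Under (T) and (R), for any modulus ρ with ρ(h)/ρ₀(h) → ∞ as h → 0,
the Hölder seminorms |W_n|_ρ are stochastically bounded. -/
theorem holder_seminorm_stochastically_bounded
    {Ω : Type*} [MeasurableSpace Ω] (P : Measure Ω) [IsProbabilityMeasure P]
    (W : ℕ → Ω → ℝ → ℝ)
    (hpath : ∀ n ω, ContinuousOn (W n ω) (Icc 0 1))
    (ρ₀ : ℝ → ℝ)
    (hρ₀mono : MonotoneOn ρ₀ (Icc 0 1))
    (hρ₀zero : ρ₀ 0 = 0)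
    (hρ₀nonneg : ∀ h ∈ Icc (0:ℝ) 1, 0 ≤ ρ₀ h)
    (hρ₀pos : ∀ h : ℝ, 0 < h → h ≤ 1 → 0 < ρ₀ h)
    (C : ℝ) (hC : 0 < C)
    (hT : ∀ t > C, ∃ κ > (1:ℝ), ∃ K > (0:ℝ),
      ∀ n : ℕ, ∀ u ∈ Icc (0:ℝ) 1, ∀ v ∈ Icc (0:ℝ) 1, u ≠ v →
        P {ω | t * ρ₀ |u - v| < |W n ω u - W n ω v|}
          ≤ ENNReal.ofReal (K * |u - v| ^ κ))
    (hR : ∃ p > (0:ℝ), ∃ Kt > (0:ℝ), ∀ h ∈ Icc (0:ℝ) 1, ∀ z ∈ Icc (0:ℝ) 1,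
      ρ₀ (z * h) ≤ Kt * z ^ p * ρ₀ h) :
    ∀ ρ : ℝ → ℝ, IsModulus ρ →
      Tendsto (fun h => ρ h / ρ₀ h) (𝓝[>] (0:ℝ)) atTop →
      Tendsto
        (fun M : ℝ => ⨆ n : ℕ, P {ω | ENNReal.ofReal M < holderSemi ρ (W n ω)})
        atTop (𝓝 0) :=
  holder_seminorm_stochastically_bounded_general P W hpath ρ₀ hρ₀mono C hC hT hR

end
end

section
/- Invalidity of the additively penalized multiscale statistic under non-Gaussian noise: fix p ∈ (0,1) and let (Z_t)_{t≥1} be i.i.d. N(0, 1/p), (ε_t)_{t≥1} be i.i.d. Bernoulli(p), all mutually independent, and set η_t = ε_t·Z_t (so that E η_t = 0 and Var(η_t) = 1). Let S_n be the interpolated partial sum process of η_1,…,η_n and define T_n^{DS} = sup_{0 ≤ u < v ≤ 1} max( 0, |S_n(v) − S_n(u)|/√(v−u) − √(2·log(e/(v−u))) ). Then T_n^{DS} → ∞ in probability, i.e. P(T_n^{DS} > M) → 1 as n → ∞ for every M > 0. -/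
open MeasureTheory ProbabilityTheory Filter Topology Set
open scoped ENNReal NNReal

noncomputable section

/-- The additively penalized Dümbgen–Spokoiny statistic, as an `ℝ≥0∞`-valued
supremum over all pairs 0 ≤ u < v ≤ 1. -/
def TDS (S : ℝ → ℝ) : ℝ≥0∞ :=
  ⨆ (q : ℝ × ℝ) (_ : 0 ≤ q.1 ∧ q.1 < q.2 ∧ q.2 ≤ 1),
    ENNReal.ofReal (max 0 (|S q.2 - S q.1| / Real.sqrt (q.2 - q.1)
      - Real.sqrt (2 * Real.log (Real.exp 1 / (q.2 - q.1)))))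

/-! On the grid interval `[(t-1)/n, t/n]` the statistic equals `|η_t| - √(2 log (e n))`, so
`T_n^DS > M` as soon as one `|η_t|` exceeds `a_n = M + √(2 log (e n))`. Each `|η_t|` does so with
probability at least `p φ(a_n + 1)`, `φ` the `N(0, 1/p)` density; since the Gaussian component has
variance `1/p > 1` while `a_n² ≈ 2 log n`, this is `n^{-p} e^{-O(√log n)}`, so the expected number
of exceedances `n p φ(a_n + 1)` diverges. By independence the probability of no exceedance is at
most `exp (-n p φ(a_n + 1)) → 0`. -/

lemma psp_natCast_div_sub_psp {n t : ℕ} (ht : t ∈ Finset.Icc 1 n) (Y : ℕ → ℝ) :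
    psp n Y (t / n) - psp n Y ((t - 1) / n) = Y t / √n := by
  obtain ⟨ht1, htn⟩ := Finset.mem_Icc.1 ht
  have hn : (n : ℝ) ≠ 0 := Nat.cast_ne_zero.2 (by omega)
  have hfloor : ∀ k : ℕ, ⌊(k : ℝ) / n * n⌋₊ = k := fun k ↦ by
    rw [div_mul_cancel₀ _ hn, Nat.floor_natCast]
  obtain ⟨k, rfl⟩ : ∃ k, t = k + 1 := ⟨t - 1, by omega⟩
  have hsum := Finset.sum_Icc_succ_top (Nat.le_add_left 1 k) Y
  simp only [psp, Nat.cast_add, Nat.cast_one, add_sub_cancel_right]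
  rw [← Nat.cast_add_one, hfloor, hfloor, hsum, div_mul_cancel₀ _ hn, div_mul_cancel₀ _ hn]
  ring

lemma ofReal_lt_TDS_psp {n t : ℕ} (ht : t ∈ Finset.Icc 1 n) {Y : ℕ → ℝ} {M : ℝ} (hM : 0 ≤ M)
    (hY : M + √(2 * Real.log (Real.exp 1 * n)) < |Y t|) :
    ENNReal.ofReal M < TDS (psp n Y) := by
  obtain ⟨ht1, htn⟩ := Finset.mem_Icc.1 ht
  have hn : (0 : ℝ) < n := by exact_mod_cast ht1.trans htn
  have ht1' : (1 : ℝ) ≤ t := by exact_mod_cast ht1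
  have hadm : 0 ≤ ((t : ℝ) - 1) / n ∧ ((t : ℝ) - 1) / n < t / n ∧ (t : ℝ) / n ≤ 1 :=
    ⟨div_nonneg (by linarith) hn.le, by gcongr; linarith, (div_le_one hn).2 (by exact_mod_cast htn)⟩
  have hlen : (t : ℝ) / n - (t - 1) / n = (n : ℝ)⁻¹ := by field_simp; ring
  have hsn : 0 < √(n : ℝ) := Real.sqrt_pos.2 hn
  refine lt_of_lt_of_le ?_ (le_iSup₂ (((t : ℝ) - 1) / n, (t : ℝ) / n) hadm)
  rw [ENNReal.ofReal_lt_ofReal_iff_of_nonneg hM, lt_max_iff]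
  dsimp only
  rw [psp_natCast_div_sub_psp ht, hlen, Real.sqrt_inv, div_inv_eq_mul, div_inv_eq_mul, abs_div,
    abs_of_pos hsn, div_mul_cancel₀ _ hsn.ne']
  exact .inr (by linarith)

lemma gaussianPDFReal_le_of_abs_sub_le {μ : ℝ} {v : ℝ≥0} {x y : ℝ} (h : |x - μ| ≤ |y - μ|) :
    gaussianPDFReal μ v y ≤ gaussianPDFReal μ v x := by
  simp only [gaussianPDFReal_def]
  gcongr _ * Real.exp ?_
  exact div_le_div_of_nonneg_right (neg_le_neg (sq_le_sq.2 h)) (by positivity)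

lemma ofReal_gaussianPDFReal_le_gaussianReal_Ioc {v : ℝ≥0} (hv : v ≠ 0) {a : ℝ} (ha : 0 ≤ a) :
    ENNReal.ofReal (gaussianPDFReal 0 v (a + 1)) ≤ gaussianReal 0 v (Ioc a (a + 1)) := by
  rw [gaussianReal_apply 0 hv]
  calc ENNReal.ofReal (gaussianPDFReal 0 v (a + 1))
      = ∫⁻ _ in Ioc a (a + 1), ENNReal.ofReal (gaussianPDFReal 0 v (a + 1)) := by
        simp [Real.volume_Ioc]
    _ ≤ ∫⁻ x in Ioc a (a + 1), gaussianPDF 0 v x :=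
        setLIntegral_mono (measurable_gaussianPDF 0 v) fun x hx ↦ ENNReal.ofReal_le_ofReal <|
          gaussianPDFReal_le_of_abs_sub_le <| by
            rw [sub_zero, sub_zero, abs_of_pos (ha.trans_lt hx.1), abs_of_pos (by linarith)]; exact hx.2

lemma tendsto_sq_div_two_sub_mul_sq_atTop {p : ℝ} (hp : p < 1) (c : ℝ) :
    Tendsto (fun x : ℝ ↦ x ^ 2 / 2 - p * (c + x) ^ 2 / 2) atTop atTop := by
  have h : Tendsto (fun x : ℝ ↦ x * ((1 - p) / 2 * x - p * c)) atTop atTop :=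
    tendsto_id.atTop_mul_atTop₀ <|
      tendsto_atTop_add_const_right _ _ (tendsto_id.const_mul_atTop (by linarith))
  exact (tendsto_atTop_add_const_right _ (-(p * c ^ 2 / 2)) h).congr fun x ↦ by ring

lemma gaussianPDFReal_zero_toNNReal_inv {p : ℝ} (hp : 0 < p) (x : ℝ) :
    gaussianPDFReal 0 (1 / p).toNNReal x
      = (√(2 * Real.pi / p))⁻¹ * Real.exp (-(p * x ^ 2 / 2)) := by
  simp only [gaussianPDFReal_def, Real.coe_toNNReal _ (one_div_pos.2 hp).le, sub_zero]
  congr 2 <;> field_simp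

lemma tendsto_natCast_mul_gaussianPDFReal {p : ℝ} (hp0 : 0 < p) (hp1 : p < 1) (c : ℝ) :
    Tendsto (fun n : ℕ ↦
      n * gaussianPDFReal 0 (1 / p).toNNReal (c + √(2 * Real.log (Real.exp 1 * n))))
      atTop atTop := by
  have hs : Tendsto (fun n : ℕ ↦ √(2 * Real.log (Real.exp 1 * n))) atTop atTop :=
    Real.tendsto_sqrt_atTop.comp <| (Real.tendsto_log_atTop.comp <|
      tendsto_natCast_atTop_atTop.const_mul_atTop (Real.exp_pos 1)).const_mul_atTop two_pos
  have hexp := Real.tendsto_exp_atTop.comp <| tendsto_atTop_add_const_right _ (-1) <|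
    (tendsto_sq_div_two_sub_mul_sq_atTop hp1 c).comp hs
  refine (hexp.const_mul_atTop (by positivity : 0 < (√(2 * Real.pi / p))⁻¹)).congr' ?_
  filter_upwards [eventually_ge_atTop 1] with n hn
  have hn1 : (1 : ℝ) ≤ n := by exact_mod_cast hn
  have hlog : Real.log (Real.exp 1 * n) = 1 + Real.log n := by
    rw [Real.log_mul (Real.exp_ne_zero 1) (by positivity), Real.log_exp]
  have hs2 : √(2 * Real.log (Real.exp 1 * n)) ^ 2 / 2 - 1 = Real.log n := by
    rw [Real.sq_sqrt (by rw [hlog]; linarith [Real.log_nonneg hn1]), hlog]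
    ring
  simp only [Function.comp_apply, gaussianPDFReal_zero_toNNReal_inv hp0]
  rw [← sub_eq_add_neg, sub_right_comm, Real.exp_sub, hs2, Real.exp_log (by positivity),
    Real.exp_neg]
  ring

lemma ENNReal.one_sub_ofReal_pow_le (r : ℝ) (n : ℕ) :
    (1 - ENNReal.ofReal r) ^ n ≤ ENNReal.ofReal (Real.exp (-(n * r))) := by
  have hbase : 1 - ENNReal.ofReal r ≤ ENNReal.ofReal (Real.exp (-r)) := by
    rcases le_total 0 r with hr | hr
    · rw [← ENNReal.ofReal_one, ← ENNReal.ofReal_sub _ hr]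
      exact ENNReal.ofReal_le_ofReal (Real.one_sub_le_exp_neg r)
    · exact tsub_le_self.trans (ENNReal.one_le_ofReal.2 (Real.one_le_exp (by linarith)))
  calc (1 - ENNReal.ofReal r) ^ n ≤ ENNReal.ofReal (Real.exp (-r)) ^ n := by gcongr
    _ = ENNReal.ofReal (Real.exp (-(n * r))) := by
      rw [← ENNReal.ofReal_pow (Real.exp_pos _).le, ← Real.exp_nat_mul, mul_neg]

namespace ProbabilityTheory

variable {Ω : Type*} [MeasurableSpace Ω] {P : Measure Ω}

lemma iIndepFun.curry {ι κ 𝓧 : Type*} [MeasurableSpace 𝓧] {X : ι × κ → Ω → 𝓧}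
    (mX : ∀ p, Measurable (X p)) (h : iIndepFun X P) :
    iIndepFun (fun i ω j ↦ X (i, j) ω) P := by
  have := h.isProbabilityMeasure
  have _ p : IsProbabilityMeasure (P.map (X p)) :=
    Measure.isProbabilityMeasure_map (mX p).aemeasurable
  have hrow : ∀ i, P.map (fun ω j ↦ X (i, j) ω) = Measure.infinitePi fun j ↦ P.map (X (i, j)) :=
    fun i ↦ (h.precomp (Prod.mk_right_injective i)).map_fun_eq_infinitePi_map fun _ ↦ mX _
  have hcurry : (fun ω i j ↦ X (i, j) ω) = MeasurableEquiv.curry ι κ 𝓧 ∘ fun ω p ↦ X p ω := rfl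
  rw [iIndepFun_iff_map_fun_eq_infinitePi_map (fun i ↦ by fun_prop), funext hrow, hcurry,
    ← Measure.map_map (by fun_prop) (by fun_prop), h.map_fun_eq_infinitePi_map mX,
    Measure.infinitePi_map_curry fun i j ↦ P.map (X (i, j))]

lemma iIndepFun.comp₂_of_sumElim {ι β γ : Type*} [MeasurableSpace β] [MeasurableSpace γ]
    {X Y : ι → Ω → β} (hX : ∀ i, Measurable (X i)) (hY : ∀ i, Measurable (Y i))
    (h : iIndepFun (Sum.elim X Y) P) {f : β → β → γ} (hf : Measurable (Function.uncurry f)) :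
    iIndepFun (fun i ω ↦ f (X i ω) (Y i ω)) P := by
  -- reindex `ι ⊕ ι` by `ι × Bool`, so that currying groups `X i` and `Y i` into one variable
  let g : ι × Bool → ι ⊕ ι := Equiv.boolProdEquivSum ι ∘ Prod.swap
  have hg : g.Injective := (Equiv.boolProdEquivSum ι).injective.comp Prod.swap_injective
  have hmeas : ∀ q, Measurable (Sum.elim X Y (g q)) := by
    rintro ⟨i, _ | _⟩ <;> simp [g, Equiv.boolProdEquivSum, hX, hY]
  have hF : Measurable fun v : Bool → β ↦ f (v false) (v true) :=
    hf.comp (f := fun v : Bool → β ↦ (v false, v true)) (by fun_prop)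
  exact (h.precomp hg).curry hmeas |>.comp _ fun _ ↦ hF

lemma measure_lt_abs_mul_of_indepFun [IsFiniteMeasure P] {X Y : Ω → ℝ} {p a : ℝ}
    (hX : Measurable X) (hY : Measurable Y) (hXY : IndepFun X Y P)
    (hXlaw : P.map X
      = ENNReal.ofReal p • Measure.dirac 1 + ENNReal.ofReal (1 - p) • Measure.dirac 0)
    (ha : 0 ≤ a) :
    P {ω | a < |X ω * Y ω|} = ENNReal.ofReal p * P.map Y {y | a < |y|} := by
  have hs : MeasurableSet {q : ℝ × ℝ | a < |q.1 * q.2|} :=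
    measurableSet_lt measurable_const (measurable_fst.mul measurable_snd).abs
  change P ((fun ω ↦ (X ω, Y ω)) ⁻¹' {q : ℝ × ℝ | a < |q.1 * q.2|}) = _
  rw [← Measure.map_apply (hX.prodMk hY) hs,
    hXY.map_prod_eq_prod_map_map hX.aemeasurable hY.aemeasurable, Measure.prod_apply hs, hXlaw,
    lintegral_add_measure, lintegral_smul_measure, lintegral_smul_measure,
    lintegral_dirac, lintegral_dirac]
  simp [Set.preimage, not_lt.2 ha]

lemma tendsto_measure_exists_lt_of_iIndepFun [IsProbabilityMeasure P] {X : ℕ → Ω → ℝ}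
    (hX : ∀ t, Measurable (X t)) (hind : iIndepFun X P) {a r : ℕ → ℝ}
    (hr : ∀ n t, ENNReal.ofReal (r n) ≤ P {ω | a n < X t ω})
    (hlim : Tendsto (fun n : ℕ ↦ n * r n) atTop atTop) :
    Tendsto (fun n ↦ P {ω | ∃ t ∈ Finset.Icc 1 n, a n < X t ω}) atTop (𝓝 1) := by
  set below : ℕ → ℕ → Set Ω := fun n t ↦ X t ⁻¹' Iic (a n)
  have hbelow : ∀ n t, MeasurableSet (below n t) := fun n t ↦ measurableSet_Iic.preimage (hX t)
  have hbelow_compl : ∀ n t, (below n t)ᶜ = {ω | a n < X t ω} := fun n t ↦ by ext; simp [below]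
  have hnone : ∀ n, P (⋂ t ∈ Finset.Icc 1 n, below n t)
      ≤ ENNReal.ofReal (Real.exp (-(n * r n))) := fun n ↦ by
    rw [hind.measure_inter_preimage_eq_mul _ fun _ _ ↦ measurableSet_Iic]
    calc ∏ t ∈ Finset.Icc 1 n, P (below n t)
        ≤ ∏ t ∈ Finset.Icc 1 n, (1 - ENNReal.ofReal (r n)) := by
          refine Finset.prod_le_prod' fun t _ ↦
            ENNReal.le_sub_of_add_le_right ENNReal.ofReal_ne_top ?_
          rw [← prob_add_prob_compl (μ := P) (hbelow n t), hbelow_compl]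
          gcongr
          exact hr n t
      _ ≤ _ := by simpa using ENNReal.one_sub_ofReal_pow_le (r n) n
  have hexp : Tendsto (fun n : ℕ ↦ ENNReal.ofReal (Real.exp (-(n * r n)))) atTop (𝓝 0) := by
    simpa using ENNReal.tendsto_ofReal
      (Real.tendsto_exp_atBot.comp (tendsto_neg_atTop_atBot.comp hlim))
  have hnone_tendsto := tendsto_of_tendsto_of_tendsto_of_le_of_le tendsto_const_nhds hexp
    (fun _ ↦ zero_le) hnone
  have hsome : ∀ n, {ω | ∃ t ∈ Finset.Icc 1 n, a n < X t ω}
      = (⋂ t ∈ Finset.Icc 1 n, below n t)ᶜ := fun n ↦ by ext; simp [below]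
  simp_rw [hsome, prob_compl_eq_one_sub (Finset.measurableSet_biInter _ fun t _ ↦ hbelow _ t)]
  simpa using ENNReal.Tendsto.sub tendsto_const_nhds hnone_tendsto (.inl ENNReal.one_ne_top)

end ProbabilityTheory

/-- Invalidity of the additively penalized multiscale statistic under
non-Gaussian (Gaussian-mixture) noise: T_n^DS → ∞ in probability. -/
theorem additive_multiscale_invalid
    {Ω : Type*} [MeasurableSpace Ω] (P : Measure Ω) [IsProbabilityMeasure P]
    (p : ℝ) (hp0 : 0 < p) (hp1 : p < 1)
    (Z ε : ℕ → Ω → ℝ)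
    (hZmeas : ∀ t, Measurable (Z t)) (hεmeas : ∀ t, Measurable (ε t))
    (hindep : iIndepFun (Sum.elim Z ε) P)
    (hZ : ∀ t, Measure.map (Z t) P = gaussianReal 0 (Real.toNNReal (1 / p)))
    (hε : ∀ t, Measure.map (ε t) P
      = ENNReal.ofReal p • Measure.dirac (1 : ℝ)
        + ENNReal.ofReal (1 - p) • Measure.dirac (0 : ℝ)) :
    ∀ M > (0:ℝ),
      Tendsto
        (fun n => P {ω | ENNReal.ofReal M
          < TDS (psp n (fun t => ε t ω * Z t ω))})
        atTop (𝓝 1) := by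
  intro M hM
  set a : ℕ → ℝ := fun n ↦ M + √(2 * Real.log (Real.exp 1 * n))
  have hv : (1 / p).toNNReal ≠ 0 := by simpa using hp0
  have hη : iIndepFun (fun t ω ↦ |ε t ω * Z t ω|) P :=
    hindep.comp₂_of_sumElim hZmeas hεmeas (f := fun z e ↦ |e * z|) (by fun_prop)
  have hr : ∀ n t, ENNReal.ofReal (p * gaussianPDFReal 0 (1 / p).toNNReal (a n + 1))
      ≤ P {ω | a n < |ε t ω * Z t ω|} := fun n t ↦ by
    have ha : 0 ≤ a n := by positivity
    rw [measure_lt_abs_mul_of_indepFun (hεmeas t) (hZmeas t)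
      (hindep.indepFun (Sum.inr_ne_inl (a := t) (b := t))) (hε t) ha, hZ t,
      ENNReal.ofReal_mul hp0.le]
    gcongr
    exact (ofReal_gaussianPDFReal_le_gaussianReal_Ioc hv ha).trans
      (measure_mono fun x hx ↦ hx.1.trans_le (le_abs_self x))
  have hlim : Tendsto (fun n : ℕ ↦ n * (p * gaussianPDFReal 0 (1 / p).toNNReal (a n + 1)))
      atTop atTop :=
    ((tendsto_natCast_mul_gaussianPDFReal hp0 hp1 (M + 1)).const_mul_atTop hp0).congr
      fun n ↦ by rw [mul_left_comm, add_right_comm]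
  refine tendsto_of_tendsto_of_tendsto_of_le_of_le
    (tendsto_measure_exists_lt_of_iIndepFun (fun t ↦ by fun_prop) hη hr hlim)
    tendsto_const_nhds (fun n ↦ measure_mono ?_) fun _ ↦ prob_le_one
  rintro ω ⟨t, ht, hexceed⟩
  exact ofReal_lt_TDS_psp ht hM.le hexceed

end
end

section
/- Necessity of the threshold in thresholded weak convergence: for every T > 0 there exists a probability distribution ν on ℝ with mean 0, variance 1 and finite sub-Gaussian norm ‖·‖_{ψ₂} (where ‖X‖_{ψ₂} = inf{c > 0 : E exp(X²/c²) ≤ 2}), such that if η_1, η_2, … are i.i.d. with law ν and S̃_n is the interpolated partial sum process of η_1,…,η_n, then P( |S̃_n|_{ρ₂} ≥ T ) → 1 as n → ∞. -/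
open MeasureTheory ProbabilityTheory Filter Topology Set
open scoped ENNReal NNReal

noncomputable section

/-!
Take for `ν` the law of a variable that vanishes with probability `1 - b` and otherwise is a
two-sided Rayleigh variable with second moment `1 / b`. It is centred, has variance `1` and
`E exp (b X² / 2) = 1 + b ≤ 2`, but `P (X ≥ y) ≥ (b / 2) exp (-b y²)`. The increment of `S̃ₙ`
over `[(t - 1) / n, t / n]` has `ρ₂`-ratio `|η_t| / √(1 + log n)`, and for `b = 1 / (1 + T²)`
the expected number of `t ≤ n` with `η_t ≥ T √(1 + log n)` is `≳ n ^ (1 - b T²) = n ^ b → ∞`;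
by independence such a `t` exists with probability tending to `1`.
-/

open scoped Nat

namespace Real

theorem integrable_abs_pow_mul_exp_neg_mul_sq {a : ℝ} (ha : 0 < a) (k : ℕ) :
    Integrable fun x : ℝ => |x| ^ k * exp (-a * x ^ 2) := by
  simpa [abs_mul, abs_of_nonneg (exp_pos _).le, rpow_natCast] using
    (integrable_rpow_mul_exp_neg_mul_sq ha (s := k) (by linarith [k.cast_nonneg (α := ℝ)])).abs

theorem integral_abs_pow_odd_mul_exp_neg_mul_sq {a : ℝ} (ha : 0 < a) (k : ℕ) :
    ∫ x : ℝ, |x| ^ (2 * k + 1) * exp (-a * x ^ 2) = k ! / a ^ (k + 1) := by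
  have hq : (-1 : ℝ) < (2 * k + 1 : ℕ) := by push_cast; linarith [k.cast_nonneg (α := ℝ)]
  have h := integral_rpow_mul_exp_neg_mul_rpow two_pos hq ha
  have hexp : (-(((2 * k + 1 : ℕ) : ℝ) + 1) / 2) = -((k + 1 : ℕ) : ℝ) := by push_cast; ring
  have hΓ : ((((2 * k + 1 : ℕ) : ℝ) + 1) / 2) = k + 1 := by push_cast; ring
  rw [hexp, hΓ, Gamma_nat_eq_factorial, rpow_neg ha.le, rpow_natCast] at h
  simp only [rpow_natCast, rpow_two] at h
  have habs (x : ℝ) : |x| ^ (2 * k + 1) * exp (-a * x ^ 2)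
      = (fun t => t ^ (2 * k + 1) * exp (-a * t ^ 2)) |x| := by simp only [sq_abs]
  rw [integral_congr_ae (ae_of_all _ habs),
    integral_comp_abs (f := fun t => t ^ (2 * k + 1) * exp (-a * t ^ 2)), h]
  field_simp

theorem integral_Ioi_mul_exp_neg_mul_sq {a : ℝ} (ha : 0 < a) (y : ℝ) :
    ∫ x in Ioi y, x * exp (-a * x ^ 2) = exp (-a * y ^ 2) / (2 * a) := by
  have hderiv (x : ℝ) (_ : x ∈ Ici y) :
      HasDerivAt (fun x => -(2 * a)⁻¹ * exp (-a * x ^ 2)) (x * exp (-a * x ^ 2)) x := by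
    refine (((hasDerivAt_pow 2 x).const_mul (-a)).exp.const_mul (-(2 * a)⁻¹)).congr_deriv ?_
    field_simp
    ring
  have hlim :
      Tendsto (fun x => -(2 * a)⁻¹ * exp (-a * x ^ 2)) atTop (𝓝 (-(2 * a)⁻¹ * 0)) :=
    (tendsto_exp_atBot.comp <|
      (tendsto_pow_atTop two_ne_zero).const_mul_atTop_of_neg (neg_lt_zero.2 ha)).const_mul _
  rw [integral_Ioi_of_hasDerivAt_of_tendsto' hderiv
    (integrable_mul_exp_neg_mul_sq ha).integrableOn hlim]
  field_simp
  ring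

end Real

open Real

/-- `b` times the two-sided Rayleigh density `b |x| exp (-b x²)`, of second moment `1 / b`. -/
def sparseRayleighDensity (b x : ℝ) : ℝ := b ^ 2 * (|x| * exp (-b * x ^ 2))

def sparseRayleigh (b : ℝ) : Measure ℝ :=
  volume.withDensity (fun x => ENNReal.ofReal (sparseRayleighDensity b x)) +
    ENNReal.ofReal (1 - b) • Measure.dirac 0

section SparseRayleigh

variable {b : ℝ}

theorem sparseRayleighDensity_nonneg (b x : ℝ) : 0 ≤ sparseRayleighDensity b x := by
  unfold sparseRayleighDensity; positivity

theorem measurable_sparseRayleighDensity (b : ℝ) :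
    Measurable fun x => ENNReal.ofReal (sparseRayleighDensity b x) := by
  unfold sparseRayleighDensity; fun_prop

theorem integrable_withDensity_sparseRayleighDensity {f : ℝ → ℝ}
    (hf : Integrable fun x => sparseRayleighDensity b x * f x) :
    Integrable f (volume.withDensity fun x => ENNReal.ofReal (sparseRayleighDensity b x)) := by
  rw [integrable_withDensity_iff_integrable_smul' (measurable_sparseRayleighDensity b)
    (ae_of_all _ fun _ => ENNReal.ofReal_lt_top)]
  simpa [ENNReal.toReal_ofReal (sparseRayleighDensity_nonneg b _)] using hf

theorem integrable_sparseRayleigh {f : ℝ → ℝ}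
    (hf : Integrable fun x => sparseRayleighDensity b x * f x) :
    Integrable f (sparseRayleigh b) :=
  (integrable_withDensity_sparseRayleighDensity hf).add_measure
    ((integrable_dirac enorm_lt_top).smul_measure ENNReal.ofReal_ne_top)

theorem integral_sparseRayleigh (hb1 : b ≤ 1) {f : ℝ → ℝ}
    (hf : Integrable fun x => sparseRayleighDensity b x * f x) :
    ∫ x, f x ∂sparseRayleigh b = (∫ x, sparseRayleighDensity b x * f x) + (1 - b) * f 0 := by
  rw [sparseRayleigh, integral_add_measure (integrable_withDensity_sparseRayleighDensity hf)
    ((integrable_dirac enorm_lt_top).smul_measure ENNReal.ofReal_ne_top),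
    integral_withDensity_eq_integral_toReal_smul (measurable_sparseRayleighDensity b)
      (ae_of_all _ fun _ => ENNReal.ofReal_lt_top),
    integral_smul_measure, integral_dirac, ENNReal.toReal_ofReal (by linarith)]
  simp only [ENNReal.toReal_ofReal (sparseRayleighDensity_nonneg b _), smul_eq_mul]

theorem integrable_sparseRayleighDensity_mul_pow (hb : 0 < b) (m : ℕ) :
    Integrable fun x => sparseRayleighDensity b x * x ^ m := by
  refine ((integrable_abs_pow_mul_exp_neg_mul_sq hb (m + 1)).const_mul (b ^ 2)).mono'
    (by unfold sparseRayleighDensity; fun_prop) (ae_of_all _ fun x => le_of_eq ?_)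
  simp only [sparseRayleighDensity, norm_mul, norm_pow, Real.norm_eq_abs, abs_abs,
    abs_of_nonneg (exp_pos _).le, sq_abs]
  ring

theorem integrable_sparseRayleighDensity (hb : 0 < b) : Integrable (sparseRayleighDensity b) := by
  simpa using integrable_sparseRayleighDensity_mul_pow hb 0

theorem integral_sparseRayleighDensity (hb : 0 < b) : ∫ x, sparseRayleighDensity b x = b := by
  have h := integral_abs_pow_odd_mul_exp_neg_mul_sq hb 0
  simp only [mul_zero, zero_add, pow_one, Nat.factorial_zero, Nat.cast_one] at h
  simp only [sparseRayleighDensity]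
  rw [integral_const_mul, h]
  field_simp

theorem integral_sparseRayleighDensity_mul_self (b : ℝ) :
    ∫ x, sparseRayleighDensity b x * x = 0 := by
  have hodd := integral_neg_eq_self (fun x => sparseRayleighDensity b x * x) volume
  simp only [sparseRayleighDensity, abs_neg, neg_sq, mul_neg, integral_neg] at hodd
  simp only [sparseRayleighDensity]
  linarith

theorem integral_sparseRayleighDensity_mul_sq (hb : 0 < b) :
    ∫ x, sparseRayleighDensity b x * x ^ 2 = 1 := by
  have h : ∫ x, |x| ^ 3 * exp (-b * x ^ 2) = 1 / b ^ 2 := by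
    simpa using integral_abs_pow_odd_mul_exp_neg_mul_sq hb 1
  have hcube (x : ℝ) :
      sparseRayleighDensity b x * x ^ 2 = b ^ 2 * (|x| ^ 3 * exp (-b * x ^ 2)) := by
    rw [sparseRayleighDensity, ← sq_abs x]; ring
  simp only [hcube, integral_const_mul, h]
  field_simp

theorem sparseRayleighDensity_mul_exp (b x : ℝ) :
    sparseRayleighDensity b x * exp (b / 2 * x ^ 2) = b ^ 2 * (|x| * exp (-(b / 2) * x ^ 2)) := by
  rw [sparseRayleighDensity, mul_assoc, mul_assoc, ← exp_add]
  ring_nf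

theorem integrable_sparseRayleighDensity_mul_exp (hb : 0 < b) :
    Integrable fun x => sparseRayleighDensity b x * exp (b / 2 * x ^ 2) := by
  simpa only [sparseRayleighDensity_mul_exp, pow_one] using
    (integrable_abs_pow_mul_exp_neg_mul_sq (half_pos hb) 1).const_mul (b ^ 2)

theorem integral_sparseRayleighDensity_mul_exp (hb : 0 < b) :
    ∫ x, sparseRayleighDensity b x * exp (b / 2 * x ^ 2) = 2 * b := by
  have h := integral_abs_pow_odd_mul_exp_neg_mul_sq (half_pos hb) 0
  simp only [mul_zero, zero_add, pow_one, Nat.factorial_zero, Nat.cast_one] at h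
  simp only [sparseRayleighDensity_mul_exp, integral_const_mul, h]
  field_simp

theorem isProbabilityMeasure_sparseRayleigh (hb : 0 < b) (hb1 : b ≤ 1) :
    IsProbabilityMeasure (sparseRayleigh b) := by
  have hdens : volume.withDensity (fun x => ENNReal.ofReal (sparseRayleighDensity b x)) univ
      = ENNReal.ofReal b := by
    rw [withDensity_apply _ MeasurableSet.univ, Measure.restrict_univ,
      ← ofReal_integral_eq_lintegral_ofReal (integrable_sparseRayleighDensity hb)
        (ae_of_all _ (sparseRayleighDensity_nonneg b)), integral_sparseRayleighDensity hb]
  constructor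
  rw [sparseRayleigh, Measure.add_apply, hdens, Measure.smul_apply, measure_univ, smul_eq_mul,
    mul_one, ← ENNReal.ofReal_add hb.le (by linarith)]
  norm_num

theorem ofReal_le_sparseRayleigh_Ici (hb : 0 < b) {y : ℝ} (hy : 0 ≤ y) :
    ENNReal.ofReal (b / 2 * exp (-b * y ^ 2)) ≤ sparseRayleigh b (Ici y) := by
  have hdens : ∫ x in Ici y, sparseRayleighDensity b x = b / 2 * exp (-b * y ^ 2) := by
    have hpos : ∀ x ∈ Ioi y, sparseRayleighDensity b x = b ^ 2 * (x * exp (-b * x ^ 2)) :=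
      fun x hx => by rw [sparseRayleighDensity, abs_of_pos (hy.trans_lt hx)]
    rw [integral_Ici_eq_integral_Ioi, setIntegral_congr_fun measurableSet_Ioi hpos,
      integral_const_mul, integral_Ioi_mul_exp_neg_mul_sq hb]
    field_simp
  calc ENNReal.ofReal (b / 2 * exp (-b * y ^ 2))
      = ∫⁻ x in Ici y, ENNReal.ofReal (sparseRayleighDensity b x) := by
        rw [← hdens, ofReal_integral_eq_lintegral_ofReal
          (integrable_sparseRayleighDensity hb).integrableOn
          (ae_of_all _ (sparseRayleighDensity_nonneg b))]
    _ = volume.withDensity (fun x => ENNReal.ofReal (sparseRayleighDensity b x)) (Ici y) :=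
        (withDensity_apply _ measurableSet_Ici).symm
    _ ≤ sparseRayleigh b (Ici y) := by
        rw [sparseRayleigh, Measure.add_apply]
        exact le_self_add

theorem integrable_pow_sparseRayleigh (hb : 0 < b) (m : ℕ) :
    Integrable (fun x => x ^ m) (sparseRayleigh b) :=
  integrable_sparseRayleigh (integrable_sparseRayleighDensity_mul_pow hb m)

theorem integral_id_sparseRayleigh (hb : 0 < b) (hb1 : b ≤ 1) :
    ∫ x, x ∂sparseRayleigh b = 0 := by
  rw [integral_sparseRayleigh hb1 (by simpa using integrable_sparseRayleighDensity_mul_pow hb 1),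
    integral_sparseRayleighDensity_mul_self]
  ring

theorem integral_sq_sparseRayleigh (hb : 0 < b) (hb1 : b ≤ 1) :
    ∫ x, x ^ 2 ∂sparseRayleigh b = 1 := by
  rw [integral_sparseRayleigh hb1 (integrable_sparseRayleighDensity_mul_pow hb 2),
    integral_sparseRayleighDensity_mul_sq hb]
  ring

theorem exists_integral_exp_sq_div_sq_sparseRayleigh_le_two (hb : 0 < b) (hb1 : b ≤ 1) :
    ∃ c > (0 : ℝ), Integrable (fun x => exp (x ^ 2 / c ^ 2)) (sparseRayleigh b) ∧
      ∫ x, exp (x ^ 2 / c ^ 2) ∂sparseRayleigh b ≤ 2 := by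
  refine ⟨√(2 / b), by positivity, ?_⟩
  have hc (x : ℝ) : x ^ 2 / √(2 / b) ^ 2 = b / 2 * x ^ 2 := by
    rw [sq_sqrt (by positivity)]; field_simp
  simp only [hc]
  refine ⟨integrable_sparseRayleigh (integrable_sparseRayleighDensity_mul_exp hb), ?_⟩
  rw [integral_sparseRayleigh hb1 (integrable_sparseRayleighDensity_mul_exp hb),
    integral_sparseRayleighDensity_mul_exp hb]
  norm_num
  linarith

end SparseRayleigh

theorem psp_natCast_div {n : ℕ} (hn : n ≠ 0) (Y : ℕ → ℝ) (k : ℕ) :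
    psp n Y (k / n) = (∑ t ∈ Finset.Icc 1 k, Y t) / √n := by
  rw [psp, div_mul_cancel₀ _ (Nat.cast_ne_zero.2 hn), Nat.floor_natCast, sub_self, zero_mul,
    add_zero]

theorem rho2_inv_natCast {n : ℕ} (hn : n ≠ 0) : rho2 (n⁻¹) = √((1 + log n) / n) := by
  rw [rho2, div_inv_eq_mul, Real.log_mul (Real.exp_pos 1).ne' (Nat.cast_ne_zero.2 hn),
    Real.log_exp, inv_mul_eq_div]

theorem ofReal_le_holderSemi {ρ f : ℝ → ℝ} {u v : ℝ} (hu : u ∈ Icc (0 : ℝ) 1)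
    (hv : v ∈ Icc (0 : ℝ) 1) (huv : u ≠ v) :
    ENNReal.ofReal (|f u - f v| / ρ |u - v|) ≤ holderSemi ρ f :=
  le_iSup₂_of_le u v <| le_iSup_of_le ⟨hu, hv, huv⟩ le_rfl

theorem ofReal_le_holderSemi_psp {n t : ℕ} (ht : t ∈ Finset.Icc 1 n) (Y : ℕ → ℝ) :
    ENNReal.ofReal (|Y t| / √(1 + log n)) ≤ holderSemi rho2 (psp n Y) := by
  obtain ⟨ht1, htn⟩ := Finset.mem_Icc.1 ht
  obtain ⟨k, rfl⟩ : ∃ k, t = k + 1 := ⟨t - 1, by omega⟩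
  have hn : n ≠ 0 := by omega
  have hnR : (0 : ℝ) < n := by positivity
  have hk1 : (k : ℝ) + 1 ≤ n := by exact_mod_cast htn
  have hdist : |((k + 1 : ℕ) : ℝ) / n - (k : ℝ) / n| = (n : ℝ)⁻¹ := by
    rw [← sub_div, Nat.cast_succ, add_sub_cancel_left, abs_of_pos (by positivity), one_div]
  have hincr : psp n Y ((k + 1 : ℕ) / n) - psp n Y (k / n) = Y (k + 1) / √n := by
    rw [psp_natCast_div hn, psp_natCast_div hn, Finset.sum_Icc_succ_top (by omega), ← sub_div,
      add_sub_cancel_left]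
  have hratio : |psp n Y ((k + 1 : ℕ) / n) - psp n Y (k / n)| /
      rho2 |((k + 1 : ℕ) : ℝ) / n - (k : ℝ) / n| = |Y (k + 1)| / √(1 + log n) := by
    have hlog : 0 ≤ log n := Real.log_nonneg (by exact_mod_cast Nat.one_le_iff_ne_zero.2 hn)
    rw [hincr, hdist, rho2_inv_natCast hn, abs_div, abs_of_nonneg (Real.sqrt_nonneg _),
      Real.sqrt_div (by positivity)]
    field_simp
  rw [← hratio]
  refine ofReal_le_holderSemi ⟨by positivity, (div_le_one hnR).2 (by push_cast; linarith)⟩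
    ⟨by positivity, (div_le_one hnR).2 (by linarith)⟩ ?_
  rw [Ne, div_left_inj' hnR.ne']
  push_cast
  linarith

theorem ProbabilityTheory.iIndepFun.measure_biInter_preimage_eq_pow {ι Ω α : Type*}
    [MeasurableSpace Ω] [MeasurableSpace α] {P : Measure Ω} {ν : Measure α}
    {η : ι → Ω → α} (hη : ∀ t, Measurable (η t)) (hindep : iIndepFun η P)
    (hlaw : ∀ t, P.map (η t) = ν)
    {A : Set α} (hA : MeasurableSet A) (s : Finset ι) :
    P (⋂ t ∈ s, η t ⁻¹' A) = ν A ^ s.card := by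
  have hmarg (t : ι) : P (η t ⁻¹' A) = ν A := by rw [← hlaw t, Measure.map_apply (hη t) hA]
  rw [hindep.meas_biInter fun t _ => ⟨A, hA, rfl⟩, Finset.prod_congr rfl fun t _ => hmarg t,
    Finset.prod_const]

theorem tendsto_measure_biUnion_preimage_Icc {Ω α : Type*} [MeasurableSpace Ω]
    [MeasurableSpace α] {P : Measure Ω} [IsProbabilityMeasure P] {ν : Measure α}
    {η : ℕ → Ω → α} (hη : ∀ t, Measurable (η t)) (hindep : iIndepFun η P)
    (hlaw : ∀ t, P.map (η t) = ν) {A : ℕ → Set α} (hA : ∀ n, MeasurableSet (A n))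
    (hlim : Tendsto (fun n : ℕ => n * (ν (A n)).toReal) atTop atTop) :
    Tendsto (fun n => P (⋃ t ∈ Finset.Icc 1 n, η t ⁻¹' A n)) atTop (𝓝 1) := by
  have : IsProbabilityMeasure ν := hlaw 0 ▸ Measure.isProbabilityMeasure_map (hη 0).aemeasurable
  have hunion (n : ℕ) :
      P (⋃ t ∈ Finset.Icc 1 n, η t ⁻¹' A n) = 1 - (1 - ν (A n)) ^ n := by
    have hU : MeasurableSet (⋃ t ∈ Finset.Icc 1 n, η t ⁻¹' A n) :=
      .biUnion (Finset.Icc 1 n).countable_toSet fun t _ => hη t (hA n)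
    rw [← ENNReal.sub_sub_cancel ENNReal.one_ne_top prob_le_one, ← prob_compl_eq_one_sub hU,
      compl_iUnion₂]
    simp only [← preimage_compl]
    rw [hindep.measure_biInter_preimage_eq_pow hη hlaw (hA n).compl, Nat.card_Icc,
      add_tsub_cancel_right, prob_compl_eq_one_sub (hA n)]
  have hmiss (n : ℕ) :
      (1 - ν (A n)) ^ n ≤ ENNReal.ofReal (exp (-(n * (ν (A n)).toReal))) := by
    rw [← ENNReal.ofReal_toReal (ENNReal.pow_ne_top (ENNReal.sub_ne_top ENNReal.one_ne_top)),
      ENNReal.toReal_pow, ENNReal.toReal_sub_of_le prob_le_one ENNReal.one_ne_top,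
      ENNReal.toReal_one, neg_mul_eq_mul_neg, Real.exp_nat_mul]
    exact ENNReal.ofReal_le_ofReal <| pow_le_pow_left₀
      (sub_nonneg.2 (ENNReal.toReal_le_of_le_ofReal zero_le_one (by simpa using prob_le_one)))
      (Real.one_sub_le_exp_neg _) n
  have hzero : Tendsto (fun n => (1 - ν (A n)) ^ n) atTop (𝓝 0) := by
    refine tendsto_of_tendsto_of_tendsto_of_le_of_le tendsto_const_nhds ?_ (fun _ => bot_le) hmiss
    rw [← ENNReal.ofReal_zero]
    exact ENNReal.tendsto_ofReal (Real.tendsto_exp_atBot.comp (tendsto_neg_atTop_atBot.comp hlim))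
  simp only [hunion]
  simpa using ENNReal.Tendsto.sub tendsto_const_nhds hzero (Or.inl ENNReal.one_ne_top)

theorem tendsto_natCast_mul_exp_neg_mul_one_add_log {c : ℝ} (hc : c < 1) :
    Tendsto (fun n : ℕ => n * exp (-(c * (1 + log n)))) atTop atTop := by
  have hpow (n : ℕ) (hn : 1 ≤ n) :
      (n : ℝ) * exp (-(c * (1 + log n))) = exp (-c) * (n : ℝ) ^ (1 - c) := by
    have hnR : (0 : ℝ) < n := by exact_mod_cast hn
    rw [Real.rpow_def_of_pos hnR, ← Real.exp_add]
    nth_rewrite 1 [← Real.exp_log hnR]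
    rw [← Real.exp_add]
    ring_nf
  refine (((tendsto_rpow_atTop (sub_pos.2 hc)).comp tendsto_natCast_atTop_atTop).const_mul_atTop
    (Real.exp_pos (-c))).congr' ?_
  filter_upwards [eventually_ge_atTop 1] with n hn
  exact (hpow n hn).symm

theorem tendsto_natCast_mul_sparseRayleigh_Ici {b T : ℝ} (hb : 0 < b) (hb1 : b ≤ 1)
    (hT : 0 ≤ T) (hbT : b * T ^ 2 < 1) :
    Tendsto (fun n : ℕ => n * (sparseRayleigh b (Ici (T * √(1 + log n)))).toReal)
      atTop atTop := by
  have := isProbabilityMeasure_sparseRayleigh hb hb1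
  refine tendsto_atTop_mono (fun n => ?_)
    ((tendsto_natCast_mul_exp_neg_mul_one_add_log hbT).const_mul_atTop (half_pos hb))
  have hsq : (T * √(1 + log n)) ^ 2 = T ^ 2 * (1 + log n) := by
    rw [mul_pow, Real.sq_sqrt (by linarith [Real.log_natCast_nonneg n])]
  have htail := ENNReal.toReal_mono (measure_ne_top _ _)
    (ofReal_le_sparseRayleigh_Ici hb (y := T * √(1 + log n)) (by positivity))
  rw [ENNReal.toReal_ofReal (by positivity), hsq] at htail
  calc b / 2 * (n * exp (-(b * T ^ 2 * (1 + log n))))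
      = n * (b / 2 * exp (-b * (T ^ 2 * (1 + log n)))) := by ring_nf
    _ ≤ _ := by gcongr

/-- Necessity of the threshold in thresholded weak convergence: for every T > 0
there is a centered, unit-variance, sub-Gaussian law ν such that for iid noise
with law ν, P(|S̃_n|_{ρ₂} ≥ T) → 1. -/
theorem threshold_necessary (T : ℝ) (hT : 0 < T) :
    ∃ ν : Measure ℝ, IsProbabilityMeasure ν ∧
      Integrable (fun x : ℝ => x) ν ∧ (∫ x : ℝ, x ∂ν) = 0 ∧
      Integrable (fun x : ℝ => x ^ 2) ν ∧ (∫ x : ℝ, x ^ 2 ∂ν) = 1 ∧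
      (∃ c > (0:ℝ), Integrable (fun x : ℝ => Real.exp (x ^ 2 / c ^ 2)) ν ∧
        ∫ x : ℝ, Real.exp (x ^ 2 / c ^ 2) ∂ν ≤ 2) ∧
      ∀ (Ω : Type) (mΩ : MeasurableSpace Ω) (P : Measure Ω),
        IsProbabilityMeasure P →
        ∀ η : ℕ → Ω → ℝ, (∀ t, Measurable (η t)) →
          iIndepFun η P →
          (∀ t, Measure.map (η t) P = ν) →
          Tendsto
            (fun n => P {ω | ENNReal.ofReal T
              ≤ holderSemi rho2 (psp n (fun k => η k ω))})
            atTop (𝓝 1) := by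
  set b : ℝ := (1 + T ^ 2)⁻¹
  have hb : 0 < b := by positivity
  have hb1 : b ≤ 1 := inv_le_one_of_one_le₀ (by nlinarith)
  have hbT : b * T ^ 2 < 1 := by rw [inv_mul_lt_one₀ (by positivity)]; linarith
  refine ⟨sparseRayleigh b, isProbabilityMeasure_sparseRayleigh hb hb1,
    by simpa using integrable_pow_sparseRayleigh hb 1, integral_id_sparseRayleigh hb hb1,
    integrable_pow_sparseRayleigh hb 2, integral_sq_sparseRayleigh hb hb1,
    exists_integral_exp_sq_div_sq_sparseRayleigh_le_two hb hb1, ?_⟩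
  intro Ω _ P _ η hη hindep hlaw
  have hlarge (n : ℕ) : ⋃ t ∈ Finset.Icc 1 n, η t ⁻¹' Ici (T * √(1 + log n)) ⊆
      {ω | ENNReal.ofReal T ≤ holderSemi rho2 (psp n fun k => η k ω)} := by
    refine iUnion₂_subset fun t ht ω hω => (ENNReal.ofReal_le_ofReal ?_).trans
      (ofReal_le_holderSemi_psp ht _)
    rw [le_div_iff₀ (Real.sqrt_pos.2 (by linarith [Real.log_natCast_nonneg n]))]
    exact hω.trans (le_abs_self _)
  exact tendsto_of_tendsto_of_tendsto_of_le_of_le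
    (tendsto_measure_biUnion_preimage_Icc hη hindep hlaw (fun _ => measurableSet_Ici)
      (tendsto_natCast_mul_sparseRayleigh_Ici hb hb1 hT.le hbT))
    tendsto_const_nhds (fun n => measure_mono (hlarge n)) (fun _ => prob_le_one)
end
end

section
/- Correctness of the narrowest significance pursuit reduction: fix n ≥ 1 and let D = {τ_1 < τ_2 < … < τ_κ} ⊂ (0, n+1); set τ_0 = 0, τ_{κ+1} = n+1 and L_k = min(τ_k − τ_{k−1}, τ_{k+1} − τ_k). Let D̃ ⊆ D, and for each τ_k ∈ D̃ let r(τ_k) be a real number with 0 ≤ r(τ_k) ≤ L_k/2. Let 𝓘 be a finite collection of half-open intervals I = (a,b] ⊆ (0, n+1) (a < b, |I| = b − a) such that: (i) I ∩ D̃ ≠ ∅ for every I ∈ 𝓘; and (ii) for every τ ∈ D̃ there exists I(τ) ∈ 𝓘 with I(τ) ∩ D = {τ} and |I(τ)| ≤ r(τ). Then for every admissible run of the NSP routine, the output NSP(𝓘) consists of exactly |D̃| pairwise disjoint intervals, and there is a bijection τ ↦ Î(τ) from D̃ onto NSP(𝓘) such that τ ∈ Î(τ), Î(τ) ∩ D =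 {τ}, and |Î(τ)| ≤ r(τ) for every τ ∈ D̃. -/
open MeasureTheory ProbabilityTheory Filter Topology Set
open scoped ENNReal NNReal

noncomputable section

attribute [local instance] Classical.propDecidable

/-- An admissible run of the narrowest significance pursuit routine on a finite
collection of half-open intervals (represented by their endpoint pairs). -/
def IsNSPRun (I0 : Finset (ℝ × ℝ)) (K : ℕ) (Ihat : ℕ → ℝ × ℝ)
    (steps : ℕ → Finset (ℝ × ℝ)) : Prop :=
  steps 0 = I0 ∧
  (∀ k < K, (steps k).Nonempty ∧ Ihat k ∈ steps k ∧
    (∀ J ∈ steps k, (Ihat k).2 - (Ihat k).1 ≤ J.2 - J.1) ∧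
    steps (k + 1) = (steps k).filter
      (fun J => Ioc J.1 J.2 ∩ Ioc (Ihat k).1 (Ihat k).2 = ∅)) ∧
  steps K = ∅
/-!
Since `r(τ) ≤ L/2`, an interval containing `τ ∈ D̃` of length at most `r(τ)` ("narrow around
`τ`") meets `D` only in `τ`, and narrow intervals around distinct points of `D̃` are disjoint.
Along any run, as long as `τ ∈ D̃` is not covered by a selected interval, some narrow interval
around `τ` survives: the interval selected next is narrow around its own point of `D̃`, hence
disjoint from it. So every selected interval, being of minimal length, is narrow around the
point of `D̃` it contains, and the run stops only once every point of `D̃` is covered. Since the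
selected intervals are pairwise disjoint, each point of `D̃` is covered exactly once.
-/

def NarrowAround (c ρ : ℝ) (I : ℝ × ℝ) : Prop :=
  c ∈ Ioc I.1 I.2 ∧ I.2 - I.1 ≤ ρ

namespace NarrowAround

variable {c c' ρ ρ' x : ℝ} {I I' : ℝ × ℝ}

theorem abs_sub_lt (h : NarrowAround c ρ I) (hx : x ∈ Ioc I.1 I.2) : |x - c| < ρ := by
  obtain ⟨⟨hc₁, hc₂⟩, hlen⟩ := h
  rw [abs_sub_lt_iff]
  constructor <;> linarith [hx.1, hx.2]

theorem disjoint (h : NarrowAround c ρ I) (h' : NarrowAround c' ρ' I')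
    (hcc' : ρ + ρ' ≤ |c - c'|) : Disjoint (Ioc I.1 I.2) (Ioc I'.1 I'.2) := by
  refine Set.disjoint_left.2 fun x hx hx' => ?_
  have := abs_sub_le c x c'
  rw [abs_sub_comm c x] at this
  linarith [h.abs_sub_lt hx, h'.abs_sub_lt hx']

theorem inter_eq_singleton {D : Set ℝ} (h : NarrowAround c ρ I) (hc : c ∈ D)
    (hD : ∀ y ∈ D, y ≠ c → 2 * ρ ≤ |y - c|) : Ioc I.1 I.2 ∩ D = {c} := by
  refine Set.eq_singleton_iff_unique_mem.2 ⟨⟨h.1, hc⟩, fun y ⟨hyI, hyD⟩ => ?_⟩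
  by_contra hyc
  linarith [h.abs_sub_lt hyI, hD y hyD hyc, abs_nonneg (y - c)]

end NarrowAround

structure IsAdapted (c r : ℕ → ℝ) (Dt : Finset ℕ) (𝓘 : Finset (ℝ × ℝ)) : Prop where
  exists_mem : ∀ I ∈ 𝓘, ∃ k ∈ Dt, c k ∈ Ioc I.1 I.2
  exists_narrowAround : ∀ k ∈ Dt, ∃ J ∈ 𝓘, NarrowAround (c k) (r k) J
  disjoint : ∀ k ∈ Dt, ∀ k' ∈ Dt, k ≠ k' → ∀ I I', NarrowAround (c k) (r k) I →
    NarrowAround (c k') (r k') I' → Disjoint (Ioc I.1 I.2) (Ioc I'.1 I'.2)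

theorem IsAdapted.eq_of_mem {c r : ℕ → ℝ} {Dt : Finset ℕ} {𝓘 : Finset (ℝ × ℝ)}
    (hA : IsAdapted c r Dt 𝓘) {k k' : ℕ} (hk : k ∈ Dt) (hk' : k' ∈ Dt) {I : ℝ × ℝ}
    (hI : NarrowAround (c k') (r k') I) (hkI : c k ∈ Ioc I.1 I.2) : k = k' := by
  by_contra hne
  obtain ⟨J, -, hJ⟩ := hA.exists_narrowAround k hk
  exact Set.disjoint_left.1 (hA.disjoint k hk k' hk' hne J I hJ hI) hJ.1 hkI

namespace IsNSPRun

variable {𝓘 : Finset (ℝ × ℝ)} {K : ℕ} {Ihat : ℕ → ℝ × ℝ} {steps : ℕ → Finset (ℝ × ℝ)}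
  {i j : ℕ}

theorem steps_subset (h : IsNSPRun 𝓘 K Ihat steps) (hij : i ≤ j) (hj : j ≤ K) :
    steps j ⊆ steps i := by
  induction j, hij using Nat.le_induction with
  | base => exact Finset.Subset.rfl
  | succ j _ ih =>
    rw [(h.2.1 j (by omega)).2.2.2]
    exact (Finset.filter_subset _ _).trans (ih (by omega))

theorem mem_of_lt (h : IsNSPRun 𝓘 K Ihat steps) (hi : i < K) : Ihat i ∈ 𝓘 :=
  h.1 ▸ h.steps_subset (Nat.zero_le i) hi.le (h.2.1 i hi).2.1

theorem disjoint_of_mem_steps (h : IsNSPRun 𝓘 K Ihat steps) (hij : i < j) (hj : j ≤ K)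
    {J : ℝ × ℝ} (hJ : J ∈ steps j) :
    Disjoint (Ioc J.1 J.2) (Ioc (Ihat i).1 (Ihat i).2) := by
  have hJ' := h.steps_subset hij hj hJ
  rw [(h.2.1 i (by omega)).2.2.2, Finset.mem_filter] at hJ'
  exact Set.disjoint_iff_inter_eq_empty.2 hJ'.2

theorem disjoint (h : IsNSPRun 𝓘 K Ihat steps) (hi : i < K) (hj : j < K) (hij : i ≠ j) :
    Disjoint (Ioc (Ihat i).1 (Ihat i).2) (Ioc (Ihat j).1 (Ihat j).2) := by
  rcases hij.lt_or_gt with hlt | hlt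
  · exact (h.disjoint_of_mem_steps hlt hj.le (h.2.1 j hj).2.1).symm
  · exact h.disjoint_of_mem_steps hlt hi.le (h.2.1 i hi).2.1

variable {c r : ℕ → ℝ} {Dt : Finset ℕ}

theorem narrowAround_of_survives (h : IsNSPRun 𝓘 K Ihat steps) (hA : IsAdapted c r Dt 𝓘)
    (hi : i < K)
    (hsurv : ∀ k ∈ Dt, (∀ i' < i, c k ∉ Ioc (Ihat i').1 (Ihat i').2) →
      ∃ J ∈ steps i, NarrowAround (c k) (r k) J) :
    ∃ k ∈ Dt, NarrowAround (c k) (r k) (Ihat i) := by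
  obtain ⟨-, hmem, hmin, -⟩ := h.2.1 i hi
  obtain ⟨k, hk, hkI⟩ := hA.exists_mem _ (h.mem_of_lt hi)
  have hfresh : ∀ i' < i, c k ∉ Ioc (Ihat i').1 (Ihat i').2 := fun i' hi' hki' =>
    Set.disjoint_left.1 (h.disjoint_of_mem_steps hi' hi.le hmem) hkI hki'
  obtain ⟨J, hJ, hJk⟩ := hsurv k hk hfresh
  exact ⟨k, hk, hkI, (hmin J hJ).trans hJk.2⟩

theorem exists_narrowAround_mem_steps (h : IsNSPRun 𝓘 K Ihat steps) (hA : IsAdapted c r Dt 𝓘)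
    (hj : j ≤ K) :
    ∀ k ∈ Dt, (∀ i < j, c k ∉ Ioc (Ihat i).1 (Ihat i).2) →
      ∃ J ∈ steps j, NarrowAround (c k) (r k) J := by
  induction j with
  | zero =>
    intro k hk _
    simpa only [h.1] using hA.exists_narrowAround k hk
  | succ j ih =>
    intro k hk hfresh
    have ih := ih (by omega)
    obtain ⟨J, hJ, hJk⟩ := ih k hk fun i hi => hfresh i (by omega)
    obtain ⟨k', hk', hk'I⟩ := h.narrowAround_of_survives hA (by omega) ih
    have hkk' : k ≠ k' := by
      rintro rfl
      exact hfresh j j.lt_succ_self hk'I.1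
    refine ⟨J, ?_, hJk⟩
    rw [(h.2.1 j (by omega)).2.2.2, Finset.mem_filter]
    exact ⟨hJ, Set.disjoint_iff_inter_eq_empty.1 (hA.disjoint k hk k' hk' hkk' J _ hJk hk'I)⟩

theorem exists_narrowAround (h : IsNSPRun 𝓘 K Ihat steps) (hA : IsAdapted c r Dt 𝓘)
    (hi : i < K) : ∃ k ∈ Dt, NarrowAround (c k) (r k) (Ihat i) :=
  h.narrowAround_of_survives hA hi fun _ => h.exists_narrowAround_mem_steps hA hi.le _

theorem exists_lt_mem (h : IsNSPRun 𝓘 K Ihat steps) (hA : IsAdapted c r Dt 𝓘) {k : ℕ}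
    (hk : k ∈ Dt) : ∃ i < K, c k ∈ Ioc (Ihat i).1 (Ihat i).2 := by
  by_contra! hfresh
  obtain ⟨J, hJ, -⟩ := h.exists_narrowAround_mem_steps hA le_rfl k hk hfresh
  simp [h.2.2] at hJ

theorem exists_bijOn (h : IsNSPRun 𝓘 K Ihat steps) (hA : IsAdapted c r Dt 𝓘) :
    ∃ g : ℕ → ℕ, Set.BijOn g Dt (Iio K) ∧ ∀ k ∈ Dt, NarrowAround (c k) (r k) (Ihat (g k)) := by
  choose! g hgK hg using fun k (hk : k ∈ Dt) => h.exists_lt_mem hA hk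
  have hnarrow : ∀ k ∈ Dt, NarrowAround (c k) (r k) (Ihat (g k)) := fun k hk => by
    obtain ⟨k', hk', hk'I⟩ := h.exists_narrowAround hA (hgK k hk)
    obtain rfl := hA.eq_of_mem hk hk' hk'I (hg k hk)
    exact hk'I
  refine ⟨g, ⟨hgK, fun k hk k' hk' hkk' => ?_, fun i hi => ?_⟩, hnarrow⟩
  · exact hA.eq_of_mem hk (Finset.mem_coe.1 hk') (hkk' ▸ hnarrow k' hk') (hg k hk)
  · obtain ⟨k, hk, hkI⟩ := h.exists_narrowAround hA hi
    refine ⟨k, hk, by_contra fun hne => ?_⟩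
    exact Set.disjoint_left.1 (h.disjoint (hgK k hk) hi hne) (hg k hk) hkI.1

end IsNSPRun

theorem min_gap_le_abs_sub {τ : ℕ → ℝ} {κ k m : ℕ} (hτ : StrictMonoOn τ (Iic (κ + 1)))
    (hk : 1 ≤ k) (hkκ : k ≤ κ) (hm : m ≤ κ + 1) (hmk : m ≠ k) :
    min (τ k - τ (k - 1)) (τ (k + 1) - τ k) ≤ |τ m - τ k| := by
  rcases hmk.lt_or_gt with hlt | hlt
  · have : τ m ≤ τ (k - 1) :=
      hτ.monotoneOn (Set.mem_Iic.2 (by omega)) (Set.mem_Iic.2 (by omega)) (by omega)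
    rw [abs_of_neg (by linarith [hτ (Set.mem_Iic.2 (by omega)) (Set.mem_Iic.2 (by omega)) hlt])]
    linarith [min_le_left (τ k - τ (k - 1)) (τ (k + 1) - τ k)]
  · have : τ (k + 1) ≤ τ m :=
      hτ.monotoneOn (Set.mem_Iic.2 (by omega)) (Set.mem_Iic.2 hm) (by omega)
    rw [abs_of_pos (by linarith [hτ (Set.mem_Iic.2 (by omega)) (Set.mem_Iic.2 hm) hlt])]
    linarith [min_le_right (τ k - τ (k - 1)) (τ (k + 1) - τ k)]

theorem nsp_correctness_general
    (κ : ℕ) (τ : ℕ → ℝ)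
    (hτmono : ∀ k ≤ κ, τ k < τ (k + 1))
    (D : Set ℝ) (hD : D = {x | ∃ k, 1 ≤ k ∧ k ≤ κ ∧ τ k = x})
    (Dt : Finset ℕ) (hDt : ∀ k ∈ Dt, 1 ≤ k ∧ k ≤ κ)
    (r : ℕ → ℝ)
    (hr : ∀ k ∈ Dt, 0 ≤ r k ∧
      r k ≤ min (τ k - τ (k - 1)) (τ (k + 1) - τ k) / 2)
    (𝓘 : Finset (ℝ × ℝ))
    (hi : ∀ I ∈ 𝓘, ∃ k ∈ Dt, τ k ∈ Ioc I.1 I.2)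
    (hii : ∀ k ∈ Dt, ∃ I ∈ 𝓘,
      Ioc I.1 I.2 ∩ D = {τ k} ∧ I.2 - I.1 ≤ r k) :
    ∀ (K : ℕ) (Ihat : ℕ → ℝ × ℝ) (steps : ℕ → Finset (ℝ × ℝ)),
      IsNSPRun 𝓘 K Ihat steps →
      K = Dt.card ∧
      (∀ i < K, ∀ j < K, i ≠ j →
        Ioc (Ihat i).1 (Ihat i).2 ∩ Ioc (Ihat j).1 (Ihat j).2 = ∅) ∧
      ∃ g : ℕ → ℕ, Set.BijOn g (↑Dt) (Set.Iio K) ∧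
        ∀ k ∈ Dt,
          τ k ∈ Ioc (Ihat (g k)).1 (Ihat (g k)).2 ∧
          Ioc (Ihat (g k)).1 (Ihat (g k)).2 ∩ D = {τ k} ∧
          (Ihat (g k)).2 - (Ihat (g k)).1 ≤ r k := by
  intro K Ihat steps hrun
  subst hD
  have hτ : StrictMonoOn τ (Iic (κ + 1)) :=
    strictMonoOn_Iic_of_lt_succ fun m hm => hτmono m (by omega)
  have hgap : ∀ k ∈ Dt, ∀ m, m ≤ κ → m ≠ k → 2 * r k ≤ |τ m - τ k| := fun k hk m hm hmk => by
    linarith [(hr k hk).2, min_gap_le_abs_sub hτ (hDt k hk).1 (hDt k hk).2 (by omega) hmk]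
  have hmemD : ∀ k ∈ Dt, τ k ∈ {x | ∃ k, 1 ≤ k ∧ k ≤ κ ∧ τ k = x} :=
    fun k hk => ⟨k, (hDt k hk).1, (hDt k hk).2, rfl⟩
  have hA : IsAdapted τ r Dt 𝓘 :=
    { exists_mem := hi
      exists_narrowAround := fun k hk => by
        obtain ⟨I, hI, hID, hlen⟩ := hii k hk
        exact ⟨I, hI, (hID.symm.subset (Set.mem_singleton _)).1, hlen⟩
      disjoint := fun k hk k' hk' hne I I' hI hI' => hI.disjoint hI' <| by
        linarith [hgap k hk k' (hDt k' hk').2 hne.symm, hgap k' hk' k (hDt k hk).2 hne,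
          abs_sub_comm (τ k) (τ k')] }
  obtain ⟨g, hg, hgI⟩ := hrun.exists_bijOn hA
  refine ⟨?_, fun i hi j hj hij => Set.disjoint_iff_inter_eq_empty.1 (hrun.disjoint hi hj hij),
    g, hg, fun k hk => ⟨(hgI k hk).1, (hgI k hk).inter_eq_singleton (hmemD k hk)
      fun _ ⟨m, _, hm, hmy⟩ hne => hmy ▸ hgap k hk m hm (by rintro rfl; exact hne hmy.symm),
      (hgI k hk).2⟩⟩
  rw [← Set.ncard_coe_finset, hg.ncard_eq, ← Finset.coe_range, Set.ncard_coe_finset,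
    Finset.card_range]

/-- Correctness of the narrowest significance pursuit reduction. -/
theorem nsp_correctness
    (n : ℕ) (hn : 1 ≤ n)
    (κ : ℕ) (τ : ℕ → ℝ)
    (hτ0 : τ 0 = 0) (hτend : τ (κ + 1) = (n : ℝ) + 1)
    (hτmono : ∀ k ≤ κ, τ k < τ (k + 1))
    (D : Set ℝ) (hD : D = {x | ∃ k, 1 ≤ k ∧ k ≤ κ ∧ τ k = x})
    (Dt : Finset ℕ) (hDt : ∀ k ∈ Dt, 1 ≤ k ∧ k ≤ κ)
    (r : ℕ → ℝ)
    (hr : ∀ k ∈ Dt, 0 ≤ r k ∧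
      r k ≤ min (τ k - τ (k - 1)) (τ (k + 1) - τ k) / 2)
    (𝓘 : Finset (ℝ × ℝ))
    (h𝓘 : ∀ I ∈ 𝓘, I.1 < I.2 ∧ Ioc I.1 I.2 ⊆ Ioo (0:ℝ) ((n : ℝ) + 1))
    (hi : ∀ I ∈ 𝓘, ∃ k ∈ Dt, τ k ∈ Ioc I.1 I.2)
    (hii : ∀ k ∈ Dt, ∃ I ∈ 𝓘,
      Ioc I.1 I.2 ∩ D = {τ k} ∧ I.2 - I.1 ≤ r k) :
    ∀ (K : ℕ) (Ihat : ℕ → ℝ × ℝ) (steps : ℕ → Finset (ℝ × ℝ)),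
      IsNSPRun 𝓘 K Ihat steps →
      K = Dt.card ∧
      (∀ i < K, ∀ j < K, i ≠ j →
        Ioc (Ihat i).1 (Ihat i).2 ∩ Ioc (Ihat j).1 (Ihat j).2 = ∅) ∧
      ∃ g : ℕ → ℕ, Set.BijOn g (↑Dt) (Set.Iio K) ∧
        ∀ k ∈ Dt,
          τ k ∈ Ioc (Ihat (g k)).1 (Ihat (g k)).2 ∧
          Ioc (Ihat (g k)).1 (Ihat (g k)).2 ∩ D = {τ k} ∧
          (Ihat (g k)).2 - (Ihat (g k)).1 ≤ r k :=
  nsp_correctness_general κ τ hτmono D hD Dt hDt r hr 𝓘 hi hii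

end
end

section
/- Compact embedding of Hölder-type spaces (Arzelà–Ascoli extension): let ρ and ρ' be moduli of continuity with ρ(h)/ρ'(h) → 0 as h → 0. Then every sequence (f_n) of continuous functions f_n : [0,1] → ℝ with sup_n ( ‖f_n‖_∞ + |f_n|_ρ ) < ∞ has a subsequence (f_{n_k}) and a limit f ∈ C^{ρ'}_0 such that ‖f_{n_k} − f‖_∞ + |f_{n_k} − f|_{ρ'} → 0 as k → ∞. -/
/-! A bound `‖f n‖_∞ + |f n|_ρ ≤ M` makes the sequence uniformly bounded and equicontinuous with
modulus `M ρ`, so Arzelà–Ascoli yields a uniformly convergent subsequence whose limit `g` inherits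
`|g u - g v| ≤ M ρ |u - v|`; as `ρ / ρ' → 0`, this already puts `g` in `C^{ρ'}_0`. For the
differences `f (φ k) - g`, increments over distances below a small scale `δ` are at most
`2 M ρ ≤ ε ρ'`, while those over distances above `δ` are at most twice the sup norm divided by
`ρ' δ`, which tends to `0` with the uniform convergence. -/

open MeasureTheory ProbabilityTheory Filter Topology Set
open scoped ENNReal NNReal

noncomputable section

theorem tendsto_nhds_zero_of_forall_le_ofReal {α : Type*} {l : Filter α} {g : α → ℝ≥0∞}
    (h : ∀ r : ℝ, 0 < r → ∀ᶠ x in l, g x ≤ ENNReal.ofReal r) : Tendsto g l (𝓝 0) := by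
  refine ENNReal.tendsto_nhds_zero.2 fun ε hε => ?_
  obtain ⟨r, -, hr0, hrε⟩ := ENNReal.lt_iff_exists_real_btwn.1 hε
  exact (h r (ENNReal.ofReal_pos.1 hr0)).mono fun x hx => hx.trans hrε.le

theorem mul_div_add_one_le {K r : ℝ} (hK : 0 ≤ K) (hr : 0 ≤ r) : K * (r / (K + 1)) ≤ r :=
  calc K * (r / (K + 1)) ≤ (K + 1) * (r / (K + 1)) := by gcongr; linarith
    _ = r := mul_div_cancel₀ r (by positivity)

theorem exists_subseq_tendstoUniformlyOn_of_abs_sub_le {α : Type*} [PseudoMetricSpace α]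
    {s : Set α} (hs : IsCompact s) {f : ℕ → α → ℝ} (hf : ∀ n, ContinuousOn (f n) s) {M : ℝ}
    (hfM : ∀ n, ∀ x ∈ s, |f n x| ≤ M) {ω : ℝ → ℝ} (hω : Tendsto ω (𝓝[≥] 0) (𝓝 0))
    (hfω : ∀ n, ∀ x ∈ s, ∀ y ∈ s, |f n x - f n y| ≤ ω (dist x y)) :
    ∃ φ : ℕ → ℕ, StrictMono φ ∧ ∃ g : α → ℝ, ContinuousOn g s ∧
      TendstoUniformlyOn (fun k => f (φ k)) g atTop s := by
  classical
  have : CompactSpace s := isCompact_iff_compactSpace.1 hs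
  let F : ℕ → BoundedContinuousFunction s ℝ :=
    fun n => .mkOfCompact ⟨s.domRestrict (f n), (hf n).domRestrict⟩
  have hF_mem : ∀ (b : BoundedContinuousFunction s ℝ) x, b ∈ range F → b x ∈ Icc (-M) M := by
    rintro b x ⟨n, rfl⟩
    exact abs_le.1 (hfM n x x.2)
  have hF_equi : Equicontinuous ((↑) : range F → s → ℝ) := by
    have habs : Tendsto (fun t : ℝ => |t|) (𝓝 0) (𝓝[≥] 0) :=
      tendsto_nhdsWithin_iff.2 ⟨continuous_abs.tendsto' 0 0 abs_zero, .of_forall abs_nonneg⟩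
    refine Metric.equicontinuous_of_continuity_modulus _ (hω.comp habs) _ ?_
    rintro x y ⟨_, n, rfl⟩
    show dist (f n x) (f n y) ≤ ω |dist x y|
    rw [Real.dist_eq, abs_of_nonneg dist_nonneg, Subtype.dist_eq]
    exact hfω n x x.2 y y.2
  obtain ⟨G, -, φ, hφ, hFG⟩ :=
    (BoundedContinuousFunction.arzela_ascoli _ isCompact_Icc _ hF_mem hF_equi).tendsto_subseq
      fun n => subset_closure (mem_range_self n)
  let g : α → ℝ := fun x => if hx : x ∈ s then G ⟨x, hx⟩ else 0
  have hG : s.domRestrict g = G := by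
    ext x
    simp [g, x.2]
  refine ⟨φ, hφ, g, ?_, ?_⟩
  · rw [continuousOn_iff_continuous_domRestrict, hG]
    exact G.continuous
  · rw [tendstoUniformlyOn_iff_tendstoUniformly_comp_coe]
    have hFG' := BoundedContinuousFunction.tendsto_iff_tendstoUniformly.1 hFG
    rw [← hG] at hFG'
    exact hFG'

section Seminorms

variable {ρ f : ℝ → ℝ}

theorem le_supNormE {u : ℝ} (hu : u ∈ Icc (0:ℝ) 1) : ENNReal.ofReal |f u| ≤ supNormE f :=
  le_iSup₂_of_le u hu le_rfl

theorem supNormE_le_ofReal {r : ℝ} (h : ∀ u ∈ Icc (0:ℝ) 1, |f u| ≤ r) :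
    supNormE f ≤ ENNReal.ofReal r :=
  iSup₂_le fun u hu => ENNReal.ofReal_le_ofReal (h u hu)

theorem le_holderSemi {u v : ℝ} (hu : u ∈ Icc (0:ℝ) 1) (hv : v ∈ Icc (0:ℝ) 1) (huv : u ≠ v) :
    ENNReal.ofReal (|f u - f v| / ρ |u - v|) ≤ holderSemi ρ f :=
  le_iSup₂_of_le u v (le_iSup_of_le ⟨hu, hv, huv⟩ le_rfl)

theorem le_holderSemiSmall {δ u v : ℝ} (hu : u ∈ Icc (0:ℝ) 1) (hv : v ∈ Icc (0:ℝ) 1)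
    (huv : u ≠ v) (hδ : |u - v| ≤ δ) :
    ENNReal.ofReal (|f u - f v| / ρ |u - v|) ≤ holderSemiSmall ρ f δ :=
  le_iSup₂_of_le u v (le_iSup_of_le ⟨hu, hv, huv, hδ⟩ le_rfl)

theorem holderSemiSmall_le_ofReal {δ r : ℝ}
    (h : ∀ u ∈ Icc (0:ℝ) 1, ∀ v ∈ Icc (0:ℝ) 1, u ≠ v → |u - v| ≤ δ →
      |f u - f v| / ρ |u - v| ≤ r) :
    holderSemiSmall ρ f δ ≤ ENNReal.ofReal r :=
  iSup₂_le fun u v => iSup_le fun ⟨hu, hv, huv, hδ⟩ =>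
    ENNReal.ofReal_le_ofReal (h u hu v hv huv hδ)

theorem abs_le_of_normRho_le {M : ℝ} (hM : 0 ≤ M) (hf : normRho ρ f ≤ ENNReal.ofReal M) {u : ℝ}
    (hu : u ∈ Icc (0:ℝ) 1) : |f u| ≤ M :=
  (ENNReal.ofReal_le_ofReal_iff hM).1 ((le_supNormE hu).trans (le_self_add.trans hf))

end Seminorms

namespace IsModulus

variable {ρ ρ' : ℝ → ℝ}

theorem pos_abs_sub (hρ : IsModulus ρ) {u v : ℝ} (hu : u ∈ Icc (0:ℝ) 1) (hv : v ∈ Icc (0:ℝ) 1)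
    (huv : u ≠ v) : 0 < ρ |u - v| :=
  hρ.pos _ (abs_pos.2 (sub_ne_zero.2 huv)) (abs_sub_le_of_nonneg_of_le hu.1 hu.2 hv.1 hv.2)

theorem tendsto_nhdsGE_zero (hρ : IsModulus ρ) : Tendsto ρ (𝓝[≥] 0) (𝓝 0) := by
  have h := hρ.continuousOn 0 ⟨le_rfl, zero_le_one⟩
  rwa [ContinuousWithinAt, hρ.zero, nhdsWithin_Icc_eq_nhdsGE zero_lt_one] at h

theorem abs_sub_le_of_normRho_le (hρ : IsModulus ρ) {f : ℝ → ℝ} {M : ℝ} (hM : 0 ≤ M)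
    (hf : normRho ρ f ≤ ENNReal.ofReal M) {u v : ℝ} (hu : u ∈ Icc (0:ℝ) 1)
    (hv : v ∈ Icc (0:ℝ) 1) : |f u - f v| ≤ M * ρ |u - v| := by
  rcases eq_or_ne u v with rfl | huv
  · simp [hρ.zero]
  have hratio : |f u - f v| / ρ |u - v| ≤ M :=
    (ENNReal.ofReal_le_ofReal_iff hM).1 ((le_holderSemi hu hv huv).trans (le_add_self.trans hf))
  rwa [div_le_iff₀ (hρ.pos_abs_sub hu hv huv)] at hratio

theorem eventually_forall_le_mul (hρ' : IsModulus ρ')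
    (hrat : Tendsto (fun h => ρ h / ρ' h) (𝓝[>] (0:ℝ)) (𝓝 0)) {c : ℝ} (hc : 0 < c) :
    ∀ᶠ δ in 𝓝[>] (0:ℝ), ∀ h ∈ Ioc 0 δ, ρ h ≤ c * ρ' h := by
  obtain ⟨ε, hε, hsub⟩ := mem_nhdsGT_iff_exists_Ioo_subset.1
    (Filter.Eventually.and (Ioo_mem_nhdsGT one_pos) (hrat.eventually_lt_const hc))
  filter_upwards [Ioo_mem_nhdsGT (show (0:ℝ) < ε from hε)] with δ hδ h hh
  obtain ⟨h1, hlt⟩ := hsub ⟨hh.1, hh.2.trans_lt hδ.2⟩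
  exact ((div_lt_iff₀ (hρ'.pos h hh.1 h1.2.le)).1 hlt).le

theorem holderSemi_le_holderSemiSmall_add (hρ : IsModulus ρ) {f : ℝ → ℝ} {S δ : ℝ}
    (hδ : δ ∈ Ioc 0 1) (hfS : ∀ u ∈ Icc (0:ℝ) 1, |f u| ≤ S) :
    holderSemi ρ f ≤ holderSemiSmall ρ f δ + ENNReal.ofReal (2 * S / ρ δ) := by
  refine iSup₂_le fun u v => iSup_le fun ⟨hu, hv, huv⟩ => ?_
  rcases le_or_gt |u - v| δ with hle | hlt
  · exact (le_holderSemiSmall hu hv huv hle).trans le_self_add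
  refine (ENNReal.ofReal_le_ofReal ?_).trans le_add_self
  have hdiff : |f u - f v| ≤ 2 * S := (abs_sub _ _).trans (by linarith [hfS u hu, hfS v hv])
  exact div_le_div₀ ((abs_nonneg _).trans hdiff) hdiff (hρ.pos δ hδ.1 hδ.2)
    (hρ.mono ⟨hδ.1.le, hδ.2⟩ ⟨abs_nonneg _, abs_sub_le_of_nonneg_of_le hu.1 hu.2 hv.1 hv.2⟩ hlt.le)

theorem holderSemiSmall_le_of_le_mul (hρ' : IsModulus ρ') {f : ℝ → ℝ} {K c δ : ℝ} (hK : 0 ≤ K)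
    (hf : ∀ u ∈ Icc (0:ℝ) 1, ∀ v ∈ Icc (0:ℝ) 1, |f u - f v| ≤ K * ρ |u - v|)
    (hδ : ∀ h ∈ Ioc 0 δ, ρ h ≤ c * ρ' h) :
    holderSemiSmall ρ' f δ ≤ ENNReal.ofReal (K * c) := by
  refine holderSemiSmall_le_ofReal fun u hu v hv huv hle => ?_
  rw [div_le_iff₀ (hρ'.pos_abs_sub hu hv huv)]
  calc |f u - f v| ≤ K * ρ |u - v| := hf u hu v hv
    _ ≤ K * (c * ρ' |u - v|) := by
      gcongr
      exact hδ _ ⟨abs_pos.2 (sub_ne_zero.2 huv), hle⟩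
    _ = K * c * ρ' |u - v| := by ring

theorem memC0_of_abs_sub_le (hρ' : IsModulus ρ')
    (hrat : Tendsto (fun h => ρ h / ρ' h) (𝓝[>] (0:ℝ)) (𝓝 0)) {g : ℝ → ℝ}
    (hg : ContinuousOn g (Icc 0 1)) {K : ℝ} (hK : 0 ≤ K)
    (hgK : ∀ u ∈ Icc (0:ℝ) 1, ∀ v ∈ Icc (0:ℝ) 1, |g u - g v| ≤ K * ρ |u - v|) :
    MemC0 ρ' g := by
  refine ⟨hg, tendsto_nhds_zero_of_forall_le_ofReal fun r hr => ?_⟩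
  filter_upwards [hρ'.eventually_forall_le_mul hrat (c := r / (K + 1)) (by positivity)] with δ hδ
  exact (hρ'.holderSemiSmall_le_of_le_mul hK hgK hδ).trans
    (ENNReal.ofReal_le_ofReal (mul_div_add_one_le hK hr.le))

theorem tendsto_normRho_zero_of_tendstoUniformlyOn (hρ' : IsModulus ρ')
    (hrat : Tendsto (fun h => ρ h / ρ' h) (𝓝[>] (0:ℝ)) (𝓝 0)) {ι : Type*} {l : Filter ι}
    {F : ι → ℝ → ℝ} {K : ℝ} (hK : 0 ≤ K)
    (hFK : ∀ i, ∀ u ∈ Icc (0:ℝ) 1, ∀ v ∈ Icc (0:ℝ) 1, |F i u - F i v| ≤ K * ρ |u - v|)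
    (hF : TendstoUniformlyOn F 0 l (Icc 0 1)) :
    Tendsto (fun i => normRho ρ' (F i)) l (𝓝 0) := by
  refine tendsto_nhds_zero_of_forall_le_ofReal fun r hr => ?_
  -- `r` is split in thirds: the sup norm, increments below the scale `δ`, increments above it.
  obtain ⟨δ, hδ, hsmall⟩ := (Filter.Eventually.and (Ioc_mem_nhdsGT one_pos)
    (hρ'.eventually_forall_le_mul hrat (c := r / 3 / (K + 1)) (by positivity))).exists
  have hρ'δ : 0 < ρ' δ := hρ'.pos δ hδ.1 hδ.2
  set S := min (r / 3) (r / 6 * ρ' δ)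
  filter_upwards [Metric.tendstoUniformlyOn_iff.1 hF S (by positivity)] with i hi
  have hFS : ∀ u ∈ Icc (0:ℝ) 1, |F i u| ≤ S := fun u hu => by simpa using (hi u hu).le
  have hS₁ : S ≤ r / 3 := min_le_left _ _
  have hS₂ : 2 * S / ρ' δ ≤ r / 3 := by
    rw [div_le_iff₀ hρ'δ]
    linarith [min_le_right (r / 3) (r / 6 * ρ' δ)]
  calc normRho ρ' (F i)
      ≤ ENNReal.ofReal S + (ENNReal.ofReal (K * (r / 3 / (K + 1))) +
          ENNReal.ofReal (2 * S / ρ' δ)) :=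
        add_le_add (supNormE_le_ofReal hFS) ((hρ'.holderSemi_le_holderSemiSmall_add hδ hFS).trans
          (add_le_add_left (hρ'.holderSemiSmall_le_of_le_mul hK (hFK i) hsmall) _))
    _ ≤ ENNReal.ofReal (r / 3) + (ENNReal.ofReal (r / 3) + ENNReal.ofReal (r / 3)) := by
        gcongr
        exact mul_div_add_one_le hK (by positivity)
    _ = ENNReal.ofReal r := by
        rw [← ENNReal.ofReal_add (by positivity) (by positivity),
          ← ENNReal.ofReal_add (by positivity) (by positivity)]
        ring_nf

end IsModulus

/-- Compact embedding of Hölder-type spaces (Arzelà–Ascoli extension):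
if ρ(h)/ρ'(h) → 0 as h → 0, any sequence bounded in C^ρ has a subsequence
converging in the C^{ρ'} norm to a limit in C^{ρ'}_0. -/
theorem compact_embedding_holder
    (ρ ρ' : ℝ → ℝ) (hρ : IsModulus ρ) (hρ' : IsModulus ρ')
    (hrat : Tendsto (fun h => ρ h / ρ' h) (𝓝[>] (0:ℝ)) (𝓝 0))
    (f : ℕ → ℝ → ℝ) (hcont : ∀ n, ContinuousOn (f n) (Icc 0 1))
    (hbdd : ∃ M : ℝ, ∀ n, normRho ρ (f n) ≤ ENNReal.ofReal M) :
    ∃ φ : ℕ → ℕ, StrictMono φ ∧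
      ∃ g : ℝ → ℝ, MemC0 ρ' g ∧
        Tendsto (fun k => normRho ρ' (fun u => f (φ k) u - g u)) atTop (𝓝 0) := by
  obtain ⟨M₀, hM₀⟩ := hbdd
  set M := max M₀ 0
  have hM : 0 ≤ M := le_max_right _ _
  have hfM : ∀ n, normRho ρ (f n) ≤ ENNReal.ofReal M :=
    fun n => (hM₀ n).trans (ENNReal.ofReal_le_ofReal (le_max_left _ _))
  have hfρ : ∀ n, ∀ u ∈ Icc (0:ℝ) 1, ∀ v ∈ Icc (0:ℝ) 1, |f n u - f n v| ≤ M * ρ |u - v| :=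
    fun n u hu v hv => hρ.abs_sub_le_of_normRho_le hM (hfM n) hu hv
  obtain ⟨φ, hφ, g, hg, hfg⟩ := exists_subseq_tendstoUniformlyOn_of_abs_sub_le isCompact_Icc hcont
    (fun n u hu => abs_le_of_normRho_le hM (hfM n) hu)
    (by simpa using hρ.tendsto_nhdsGE_zero.const_mul M)
    (fun n u hu v hv => by simpa only [Real.dist_eq] using hfρ n u hu v hv)
  have hgρ : ∀ u ∈ Icc (0:ℝ) 1, ∀ v ∈ Icc (0:ℝ) 1, |g u - g v| ≤ M * ρ |u - v| :=
    fun u hu v hv => le_of_tendsto' ((hfg.tendsto_at hu).sub (hfg.tendsto_at hv)).abs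
      fun k => hfρ (φ k) u hu v hv
  have hdiffρ : ∀ k, ∀ u ∈ Icc (0:ℝ) 1, ∀ v ∈ Icc (0:ℝ) 1,
      |(f (φ k) u - g u) - (f (φ k) v - g v)| ≤ 2 * M * ρ |u - v| := fun k u hu v hv =>
    calc |(f (φ k) u - g u) - (f (φ k) v - g v)|
        = |(f (φ k) u - f (φ k) v) - (g u - g v)| := by ring_nf
      _ ≤ |f (φ k) u - f (φ k) v| + |g u - g v| := abs_sub _ _
      _ ≤ 2 * M * ρ |u - v| := by linarith [hfρ (φ k) u hu v hv, hgρ u hu v hv]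
  have hdiff : TendstoUniformlyOn (fun k u => f (φ k) u - g u) 0 atTop (Icc 0 1) :=
    Metric.tendstoUniformlyOn_iff.2 fun ε hε => (Metric.tendstoUniformlyOn_iff.1 hfg ε hε).mono
      fun k hk u hu => by simpa [Real.dist_eq, abs_sub_comm] using hk u hu
  exact ⟨φ, hφ, g, hρ'.memC0_of_abs_sub_le hrat hg hM hgρ,
    hρ'.tendsto_normRho_zero_of_tendstoUniformlyOn hrat (by positivity) hdiffρ hdiff⟩

end
end
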